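/- arXiv:1411.5982 — 8 statements merged into one kernel-verified Lean document; each statement's English description precedes it below -/
import Mathlib

section
/- Let α ≥ 2 and let V(x) = |x|^α/α, μ the probability measure with density proportional to e^{-V}. Define f'(x) = e^{|x|^α/α} ∫_x^∞ y e^{-|y|^α/α} dy. Then sup_{x∈ℝ} f'(x) = f'(0) = α^{2/α - 1} Γ(2/α), i.e. the supremum of the function x ↦ α^{2/α-1} e^x ∫_x^∞ t^{2/α - 1} e^{-t} dt over x ≥ 0 is attained at x = 0. -/
open Real MeasureTheory Set

section aux

variable {α : ℝ}

lemma myGammaInt {β : ℝ} (hβ : 0 < β) :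
    IntegrableOn (fun t : ℝ => t ^ (β - 1) * Real.exp (-t)) (Ioi 0) :=
  (Real.GammaIntegral_convergent hβ).congr_fun (fun t _ => mul_comm _ _) measurableSet_Ioi

lemma myTrans (F : ℝ → ℝ) (x : ℝ) :
    ∫ t in Ioi x, F t = ∫ s in Ioi (0:ℝ), F (s + x) := by
  have himg : (fun s : ℝ => s + x) '' Ioi 0 = Ioi x := by
    ext t
    simp only [Set.mem_image, Set.mem_Ioi]
    constructor
    · rintro ⟨s, hs, rfl⟩
      linarith
    · intro ht
      exact ⟨t - x, by linarith, by ring⟩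
  have := integral_image_eq_integral_abs_deriv_smul (f := fun s : ℝ => s + x)
    (f' := fun _ => (1:ℝ)) (s := Ioi (0:ℝ)) measurableSet_Ioi
    (fun s _ => ((hasDerivAt_id s).add_const x).hasDerivWithinAt)
    (fun a _ b _ h => by simpa using h) F
  rw [himg] at this
  simpa using this

lemma myAux3 {β : ℝ} (hβ0 : 0 < β) (hβ1 : β ≤ 1) {x : ℝ} (hx : 0 ≤ x) :
    Real.exp x * ∫ t in Ioi x, t ^ (β - 1) * Real.exp (-t) ≤
      ∫ t in Ioi (0:ℝ), t ^ (β - 1) * Real.exp (-t) := by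
  rw [myTrans (fun t => t ^ (β - 1) * Real.exp (-t)) x, ← integral_const_mul]
  have heq : ∀ s ∈ Ioi (0:ℝ),
      Real.exp x * ((s + x) ^ (β - 1) * Real.exp (-(s + x)))
        = (s + x) ^ (β - 1) * Real.exp (-s) := by
    intro s _
    rw [show -s = x + -(s+x) by ring, Real.exp_add]
    ring
  rw [setIntegral_congr_fun measurableSet_Ioi heq]
  have hmono : ∀ s ∈ Ioi (0:ℝ),
      (s + x) ^ (β - 1) * Real.exp (-s) ≤ s ^ (β - 1) * Real.exp (-s) := by
    intro s hs
    have hs0 : (0:ℝ) < s := hs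
    exact mul_le_mul_of_nonneg_right
      (Real.rpow_le_rpow_of_nonpos hs0 (by linarith) (by linarith)) (Real.exp_nonneg _)
  have hint : IntegrableOn (fun s : ℝ => (s + x) ^ (β - 1) * Real.exp (-s)) (Ioi 0) := by
    refine Integrable.mono' (myGammaInt hβ0) ?_ ?_
    · apply ContinuousOn.aestronglyMeasurable ?_ measurableSet_Ioi
      refine ContinuousOn.mul ?_ (Continuous.continuousOn (by continuity))
      exact ContinuousOn.rpow_const (by fun_prop)
        (fun s hs => Or.inl (add_pos_of_pos_of_nonneg hs hx).ne')
    · rw [ae_restrict_iff' measurableSet_Ioi]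
      filter_upwards with s hs
      have hs0 : (0:ℝ) < s := hs
      rw [Real.norm_of_nonneg
        (mul_nonneg (Real.rpow_nonneg (by linarith) _) (Real.exp_nonneg _))]
      exact hmono s hs
  exact setIntegral_mono_on hint (myGammaInt hβ0) measurableSet_Ioi hmono

lemma myDeriv (hα : 2 ≤ α) {x : ℝ} :
    ∀ y ∈ Ioi x, HasDerivWithinAt (fun y : ℝ => y ^ α / α) (y ^ (α - 1)) (Ioi x) y := by
  intro y _
  have hα0 : (0:ℝ) < α := by linarith
  have h := (Real.hasDerivAt_rpow_const (x := y) (p := α) (Or.inr (by linarith))).div_const α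
  have he : α * y ^ (α - 1) / α = y ^ (α - 1) := by field_simp
  rw [he] at h
  exact h.hasDerivWithinAt

lemma myInj (hα : 2 ≤ α) {x : ℝ} (hx : 0 ≤ x) :
    Set.InjOn (fun y : ℝ => y ^ α / α) (Ioi x) := by
  have hα0 : (0:ℝ) < α := by linarith
  intro a ha b hb h
  have ha' : (0:ℝ) ≤ a := le_trans hx (le_of_lt ha)
  have hb' : (0:ℝ) ≤ b := le_trans hx (le_of_lt hb)
  have h' : a ^ α = b ^ α := by
    field_simp at h
    exact h
  exact Real.rpow_left_injOn hα0.ne' ha' hb' h'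

lemma myImg (hα : 2 ≤ α) {x : ℝ} (hx : 0 ≤ x) :
    (fun y : ℝ => y ^ α / α) '' Ioi x = Ioi (x ^ α / α) := by
  have hα0 : (0:ℝ) < α := by linarith
  ext t
  constructor
  · rintro ⟨y, hy, rfl⟩
    have hy' : x < y := hy
    exact Set.mem_Ioi.2 ((div_lt_div_iff_of_pos_right hα0).2 (Real.rpow_lt_rpow hx hy' hα0))
  · intro ht
    have ht' : x ^ α / α < t := ht
    have hxα : (0:ℝ) ≤ x ^ α := Real.rpow_nonneg hx α
    have hαt : x ^ α < α * t := by
      rw [div_lt_iff₀ hα0] at ht'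
      linarith [ht']
    have hαt0 : (0:ℝ) ≤ α * t := le_trans hxα hαt.le
    refine ⟨(α * t) ^ α⁻¹, ?_, ?_⟩
    · have := Real.rpow_lt_rpow hxα hαt (inv_pos.2 hα0)
      rwa [Real.rpow_rpow_inv hx hα0.ne'] at this
    · simp only
      rw [Real.rpow_inv_rpow hαt0 hα0.ne', mul_div_cancel_left₀ t hα0.ne']

lemma myIntegrand (hα : 2 ≤ α) {x : ℝ} (hx : 0 ≤ x) :
    ∀ y ∈ Ioi x, |y ^ (α - 1)| *
        (α ^ (2/α - 1) * ((y ^ α / α) ^ (2/α - 1) * Real.exp (-(y ^ α / α))))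
      = y * Real.exp (-(y ^ α) / α) := by
  intro y hy
  have hα0 : (0:ℝ) < α := by linarith
  have hy0 : (0:ℝ) < y := lt_of_le_of_lt hx hy
  have hc : (0:ℝ) < α ^ (2/α - 1) := Real.rpow_pos_of_pos hα0 _
  have h1 : (y ^ α / α) ^ (2/α - 1) = (y ^ α) ^ (2/α - 1) / α ^ (2/α - 1) :=
    Real.div_rpow (Real.rpow_nonneg hy0.le α) hα0.le _
  have h2 : (y ^ α) ^ (2/α - 1) = y ^ (2 - α) := by
    rw [← Real.rpow_mul hy0.le]
    congr 1
    field_simp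
  have h3 : |y ^ (α - 1)| = y ^ (α - 1) := abs_of_nonneg (Real.rpow_nonneg hy0.le _)
  have h4 : y ^ (α - 1) * y ^ (2 - α) = y := by
    rw [← Real.rpow_add hy0]
    norm_num
  have h5 : -(y ^ α) / α = -(y ^ α / α) := neg_div α (y ^ α)
  have hcne : α ^ (2/α - 1) ≠ 0 := hc.ne'
  have key : y ^ (α - 1) * (α ^ (2/α - 1) *
      (y ^ (2 - α) / α ^ (2/α - 1) * Real.exp (-(y ^ α / α))))
      = (y ^ (α - 1) * y ^ (2 - α)) * Real.exp (-(y ^ α / α)) := by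
    field_simp
  rw [h3, h1, h2, h5, key, h4]

lemma myCoV (hα : 2 ≤ α) {x : ℝ} (hx : 0 ≤ x) :
    ∫ y in Ioi x, y * Real.exp (-(y ^ α) / α)
      = ∫ t in Ioi (x ^ α / α), α ^ (2/α - 1) * (t ^ (2/α - 1) * Real.exp (-t)) := by
  rw [← myImg hα hx,
    integral_image_eq_integral_abs_deriv_smul measurableSet_Ioi (myDeriv hα) (myInj hα hx)]
  simp only [smul_eq_mul]
  exact (setIntegral_congr_fun measurableSet_Ioi (myIntegrand hα hx)).symm

lemma myIntOn (hα : 2 ≤ α) {x : ℝ} (hx : 0 ≤ x) :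
    IntegrableOn (fun y : ℝ => y * Real.exp (-(y ^ α) / α)) (Ioi x) := by
  have hα0 : (0:ℝ) < α := by linarith
  have hβ : (0:ℝ) < 2/α := by positivity
  have hg : IntegrableOn
      (fun t : ℝ => α ^ (2/α - 1) * (t ^ (2/α - 1) * Real.exp (-t)))
      ((fun y : ℝ => y ^ α / α) '' Ioi x) := by
    rw [myImg hα hx]
    exact (((myGammaInt hβ).mono_set
      (Set.Ioi_subset_Ioi (by positivity))).const_mul _)
  have := (integrableOn_image_iff_integrableOn_abs_deriv_smul measurableSet_Ioi
    (myDeriv hα) (myInj hα hx)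
    (fun t : ℝ => α ^ (2/α - 1) * (t ^ (2/α - 1) * Real.exp (-t)))).1 hg
  simp only [smul_eq_mul] at this
  exact this.congr_fun (myIntegrand hα hx) measurableSet_Ioi

end aux

/-- For `α ≥ 2` and `V(x) = |x|^α/α`, the derivative
`f'(x) = e^{|x|^α/α} ∫_x^∞ y e^{-|y|^α/α} dy` of the solution of the Poisson equation
attains its supremum at the origin, with `f'(0) = α^{2/α - 1} Γ(2/α)`; equivalently,
the supremum over `x ≥ 0` of `α^{2/α-1} e^x ∫_x^∞ t^{2/α-1} e^{-t} dt` is attained at `x = 0`. -/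
theorem exp_power_poisson_derivative_sup (α : ℝ) (hα : 2 ≤ α) :
    (∀ x : ℝ,
        Real.exp (|x| ^ α / α) * ∫ y in Set.Ioi x, y * Real.exp (-(|y| ^ α) / α) ≤
        Real.exp (|(0:ℝ)| ^ α / α) * ∫ y in Set.Ioi (0:ℝ), y * Real.exp (-(|y| ^ α) / α)) ∧
    (Real.exp (|(0:ℝ)| ^ α / α) * ∫ y in Set.Ioi (0:ℝ), y * Real.exp (-(|y| ^ α) / α))
        = α ^ (2/α - 1) * Real.Gamma (2/α) ∧
    (∀ x : ℝ, 0 ≤ x →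
        α ^ (2/α - 1) * Real.exp x * ∫ t in Set.Ioi x, t ^ (2/α - 1) * Real.exp (-t) ≤
        α ^ (2/α - 1) * Real.exp (0:ℝ) *
          ∫ t in Set.Ioi (0:ℝ), t ^ (2/α - 1) * Real.exp (-t)) := by
  have hα0 : (0:ℝ) < α := by linarith
  have hβ0 : (0:ℝ) < 2/α := by positivity
  have hβ1 : 2/α ≤ 1 := by
    rw [div_le_one hα0]; linarith
  have hc : (0:ℝ) < α ^ (2/α - 1) := Real.rpow_pos_of_pos hα0 _
  -- replacing |y| by y on Ioi x for x ≥ 0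
  have habs : ∀ x : ℝ, 0 ≤ x →
      (∫ y in Set.Ioi x, y * Real.exp (-(|y| ^ α) / α))
        = ∫ y in Set.Ioi x, y * Real.exp (-(y ^ α) / α) := by
    intro x hx
    apply setIntegral_congr_fun measurableSet_Ioi
    intro y hy
    have h0y : (0:ℝ) ≤ y := le_trans hx (le_of_lt hy)
    show y * Real.exp (-(|y| ^ α) / α) = y * Real.exp (-(y ^ α) / α)
    rw [abs_of_nonneg h0y]
  have h00 : ((0:ℝ) ^ α / α) = 0 := by
    rw [Real.zero_rpow hα0.ne', zero_div]
  -- part 3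
  have part3 : ∀ x : ℝ, 0 ≤ x →
      α ^ (2/α - 1) * Real.exp x * ∫ t in Set.Ioi x, t ^ (2/α - 1) * Real.exp (-t) ≤
      α ^ (2/α - 1) * Real.exp (0:ℝ) *
        ∫ t in Set.Ioi (0:ℝ), t ^ (2/α - 1) * Real.exp (-t) := by
    intro x hx
    rw [Real.exp_zero, mul_one, mul_assoc]
    exact mul_le_mul_of_nonneg_left (myAux3 hβ0 hβ1 hx) hc.le
  -- value at 0
  have hval : (∫ y in Set.Ioi (0:ℝ), y * Real.exp (-(|y| ^ α) / α))
      = α ^ (2/α - 1) * Real.Gamma (2/α) := by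
    rw [habs 0 le_rfl, myCoV hα le_rfl, h00, integral_const_mul,
      Real.Gamma_eq_integral hβ0]
    congr 1
    exact setIntegral_congr_fun measurableSet_Ioi (fun t _ => mul_comm _ _)
  have hzero : Real.exp (|(0:ℝ)| ^ α / α) = 1 := by
    rw [abs_zero, h00, Real.exp_zero]
  -- the value g(x) for x ≥ 0 is bounded by g(0)
  have hmain : ∀ x : ℝ, 0 ≤ x →
      Real.exp (|x| ^ α / α) * ∫ y in Set.Ioi x, y * Real.exp (-(|y| ^ α) / α) ≤
      α ^ (2/α - 1) * Real.Gamma (2/α) := by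
    intro x hx
    rw [abs_of_nonneg hx, habs x hx, myCoV hα hx, integral_const_mul, ← mul_assoc,
      mul_comm (Real.exp (x ^ α / α)) (α ^ (2/α - 1)), mul_assoc]
    have h1 : Real.exp (x ^ α / α) * ∫ t in Set.Ioi (x ^ α / α), t ^ (2/α - 1) * Real.exp (-t)
        ≤ ∫ t in Set.Ioi (0:ℝ), t ^ (2/α - 1) * Real.exp (-t) :=
      myAux3 hβ0 hβ1 (by positivity)
    have h2 : α ^ (2/α - 1) * ∫ t in Set.Ioi (0:ℝ), t ^ (2/α - 1) * Real.exp (-t)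
        = α ^ (2/α - 1) * Real.Gamma (2/α) := by
      rw [Real.Gamma_eq_integral hβ0]
      congr 1
      exact setIntegral_congr_fun measurableSet_Ioi (fun t _ => mul_comm _ _)
    calc α ^ (2/α - 1) *
          (Real.exp (x ^ α / α) * ∫ t in Set.Ioi (x ^ α / α), t ^ (2/α - 1) * Real.exp (-t))
        ≤ α ^ (2/α - 1) * ∫ t in Set.Ioi (0:ℝ), t ^ (2/α - 1) * Real.exp (-t) :=
          mul_le_mul_of_nonneg_left h1 hc.le
      _ = α ^ (2/α - 1) * Real.Gamma (2/α) := h2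
  -- evenness: for x < 0 the integral over Ioi x equals the one over Ioi (-x)
  have heven : ∀ x : ℝ, x < 0 →
      (∫ y in Set.Ioi x, y * Real.exp (-(|y| ^ α) / α))
        = ∫ y in Set.Ioi (-x), y * Real.exp (-(|y| ^ α) / α) := by
    intro x hx
    set F : ℝ → ℝ := fun y => y * Real.exp (-(|y| ^ α) / α) with hF
    have hFcont : Continuous F := by
      apply continuous_id.mul
      apply Real.continuous_exp.comp
      apply Continuous.div_const
      apply Continuous.neg
      exact continuous_abs.rpow_const (fun y => Or.inr hα0.le)
    have hFodd : ∀ y, F (-y) = -F y := by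
      intro y
      simp [hF, abs_neg]
    have hsplit : Set.Ioi x = Set.Ioc x (-x) ∪ Set.Ioi (-x) :=
      (Set.Ioc_union_Ioi_eq_Ioi (by linarith)).symm
    have hi1 : IntegrableOn F (Set.Ioc x (-x)) := hFcont.integrableOn_Ioc
    have hi2 : IntegrableOn F (Set.Ioi (-x)) := by
      have := myIntOn hα (x := -x) (by linarith)
      exact this.congr_fun (fun y hy => by
        have h0y : (0:ℝ) ≤ y := le_trans (by linarith) (le_of_lt hy)
        show y * Real.exp (-(y ^ α) / α) = y * Real.exp (-(|y| ^ α) / α)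
        rw [abs_of_nonneg h0y]) measurableSet_Ioi
    have hdisj : Disjoint (Set.Ioc x (-x)) (Set.Ioi (-x)) :=
      Set.Ioc_disjoint_Ioi le_rfl
    rw [hsplit, setIntegral_union hdisj measurableSet_Ioi hi1 hi2]
    have hmid : (∫ y in Set.Ioc x (-x), F y) = 0 := by
      rw [← intervalIntegral.integral_of_le (by linarith : x ≤ -x)]
      have h1 : (∫ y in x..(-x), F (-y)) = ∫ y in x..(-x), F y := by
        rw [intervalIntegral.integral_comp_neg]
        simp
      have h2 : (∫ y in x..(-x), F (-y)) = -∫ y in x..(-x), F y := by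
        simp_rw [hFodd]
        rw [intervalIntegral.integral_neg]
      have := h1.symm.trans h2
      linarith [this]
    rw [hmid, zero_add]
  refine ⟨?_, by rw [hzero, one_mul, hval], part3⟩
  intro x
  rw [hzero, one_mul, hval]
  rcases le_or_gt 0 x with hx | hx
  · exact hmain x hx
  · rw [heven x hx]
    have h := hmain (-x) (by linarith)
    rwa [abs_neg] at h
end

section
/- Let μ be the standard Gaussian measure on ℝ, b ∈ (0, 1/2), and f(x) = x e^{b x²/2}. Then f ∈ L²(μ), ∫ f dμ = 0, and f satisfies the eigenfunction equation (1+bx²)^{-1} f''(x) − ((2b+1)x + b x³)(1+bx²)^{-2} f'(x) = −(1−b) f(x) for all x. -/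
open Real MeasureTheory

/-!
The standard Gaussian `μ` is invariant under `x ↦ -x` and `f` is odd, so `∫ f dμ = 0`.
Since `f(x)² e^{-x²/2} = x² e^{-(1/2 - b)x²}`, `f ∈ L²(μ)` as soon as `b < 1/2`.
The eigenfunction equation is a direct computation from
`f' = (1 + bx²) e^{bx²/2}` and `f'' = (3bx + b²x³) e^{bx²/2}`.
-/

namespace ProbabilityTheory

lemma gaussianReal_zero_one_eq_withDensity :
    gaussianReal 0 1 = volume.withDensity fun x =>
      ENNReal.ofReal ((√(2 * π))⁻¹ * exp (-(x ^ 2) / 2)) := by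
  rw [gaussianReal_of_var_ne_zero 0 one_ne_zero]
  congr 1
  ext x
  simp [gaussianPDF, gaussianPDFReal]

instance isNegInvariant_gaussianReal_zero (v : NNReal) : (gaussianReal 0 v).IsNegInvariant := by
  constructor
  have h := gaussianReal_map_neg (μ := 0) (v := v)
  rwa [neg_zero] at h

lemma memLp_two_mul_exp_mul_sq_gaussianReal {b : ℝ} (hb : b < 1 / 2) :
    MemLp (fun x => x * exp (b * x ^ 2 / 2)) 2 (gaussianReal 0 1) := by
  rw [memLp_two_iff_integrable_sq (by fun_prop), gaussianReal_of_var_ne_zero 0 one_ne_zero,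
    integrable_withDensity_iff (measurable_gaussianPDF 0 1)
      (.of_forall fun _ => gaussianPDF_lt_top)]
  refine ((integrable_rpow_mul_exp_neg_mul_sq (b := 1 / 2 - b) (by linarith) (s := 2)
    (by norm_num)).const_mul (√(2 * π))⁻¹).congr (.of_forall fun x => ?_)
  have hexp : exp (-(1 / 2 - b) * x ^ 2) = exp (b * x ^ 2 / 2) ^ 2 * exp (-x ^ 2 / 2) := by
    rw [sq (exp _), ← exp_add, ← exp_add]
    ring_nf
  simp only [toReal_gaussianPDF, gaussianPDFReal, rpow_two, hexp, NNReal.coe_one, mul_one,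
    sub_zero]
  ring

end ProbabilityTheory

namespace MeasureTheory

lemma integral_eq_zero_of_odd {G E : Type*} [MeasurableSpace G] [AddGroup G] [MeasurableNeg G]
    [NormedAddCommGroup E] [NormedSpace ℝ E] (μ : Measure G) [μ.IsNegInvariant] {g : G → E}
    (hg : ∀ x, g (-x) = -g x) : ∫ x, g x ∂μ = 0 := by
  have h := integral_neg_eq_self g μ
  simp only [hg, integral_neg] at h
  have htwice : (2 : ℝ) • ∫ x, g x ∂μ = 0 := by
    rw [two_smul]
    nth_rw 1 [← h]
    exact neg_add_cancel _
  simpa using htwice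

end MeasureTheory

lemma hasDerivAt_mul_exp_mul_sq (b x : ℝ) :
    HasDerivAt (fun x => x * exp (b * x ^ 2 / 2)) ((1 + b * x ^ 2) * exp (b * x ^ 2 / 2)) x := by
  have h := (hasDerivAt_id' x).mul (((hasDerivAt_pow 2 x).const_mul b).div_const 2).exp
  exact h.congr_deriv (by ring)

lemma hasDerivAt_one_add_mul_sq_mul_exp_mul_sq (b x : ℝ) :
    HasDerivAt (fun x => (1 + b * x ^ 2) * exp (b * x ^ 2 / 2))
      ((3 * b * x + b ^ 2 * x ^ 3) * exp (b * x ^ 2 / 2)) x := by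
  have h := (((hasDerivAt_pow 2 x).const_mul b).const_add 1).mul
    (((hasDerivAt_pow 2 x).const_mul b).div_const 2).exp
  exact h.congr_deriv (by ring)

/-- For the standard Gaussian measure `μ`, `b ∈ (0,1/2)` and `f(x) = x e^{bx²/2}`,
the function `f` is in `L²(μ)`, is centered, and satisfies the eigenfunction equation
`σ² f'' + ((σ²)' - σ² V') f' = -(1-b) f` with `σ²(x) = 1/(1+bx²)` and `V(x) = x²/2`. -/
theorem gaussian_weighted_eigenfunction (b : ℝ) (hb : b ∈ Set.Ioo (0:ℝ) (1/2))
    (μ : Measure ℝ)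
    (hμ : μ = MeasureTheory.volume.withDensity fun x =>
      ENNReal.ofReal ((Real.sqrt (2 * π))⁻¹ * Real.exp (-(x ^ 2) / 2)))
    (f : ℝ → ℝ) (hf : f = fun x => x * Real.exp (b * x ^ 2 / 2)) :
    MemLp f 2 μ ∧ (∫ x, f x ∂μ) = 0 ∧
    ∀ x : ℝ,
      (1 + b * x ^ 2)⁻¹ * deriv (deriv f) x -
        ((2 * b + 1) * x + b * x ^ 3) / (1 + b * x ^ 2) ^ 2 * deriv f x
      = -(1 - b) * f x := by
  rw [← ProbabilityTheory.gaussianReal_zero_one_eq_withDensity] at hμ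
  subst hμ hf
  refine ⟨ProbabilityTheory.memLp_two_mul_exp_mul_sq_gaussianReal hb.2,
    integral_eq_zero_of_odd _ fun x => by simp only [neg_mul, even_two.neg_pow], ?_⟩
  intro x
  have hf' : deriv (fun x => x * exp (b * x ^ 2 / 2)) =
      fun x => (1 + b * x ^ 2) * exp (b * x ^ 2 / 2) :=
    funext fun x => (hasDerivAt_mul_exp_mul_sq b x).deriv
  have hpos : 0 < 1 + b * x ^ 2 := by nlinarith [hb.1, sq_nonneg x]
  rw [hf', (hasDerivAt_one_add_mul_sq_mul_exp_mul_sq b x).deriv]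
  field_simp
  ring
end

section
/- Let b ≥ 1/2 and for ε ∈ (0,1) define g_ε(x) = (1−ε)(1+εx²)/(1+bx²). Then inf_{x∈ℝ} g_ε(x) = ε(1−ε)/b when ε ≤ b and = 1−ε when ε ≥ b, and the supremum over ε ∈ (0,1) of this infimum equals 1/(4b). -/
open Real

/-- For `b ≥ 1/2` and `ε ∈ (0,1)`, the infimum over `x ∈ ℝ` of
`g_ε(x) = (1-ε)(1+εx²)/(1+bx²)` equals `ε(1-ε)/b` when `ε ≤ b` and `1-ε` when `ε ≥ b`,
and the supremum over `ε ∈ (0,1)` of this infimum equals `1/(4b)`. -/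
theorem gaussian_weighted_supinf (b : ℝ) (hb : 1/2 ≤ b) :
    (∀ ε ∈ Set.Ioo (0:ℝ) 1, ε ≤ b →
      IsGLB (Set.range fun x : ℝ => (1 - ε) * (1 + ε * x ^ 2) / (1 + b * x ^ 2))
        (ε * (1 - ε) / b)) ∧
    (∀ ε ∈ Set.Ioo (0:ℝ) 1, b ≤ ε →
      IsGLB (Set.range fun x : ℝ => (1 - ε) * (1 + ε * x ^ 2) / (1 + b * x ^ 2))
        (1 - ε)) ∧
    IsLUB ((fun ε : ℝ => if ε ≤ b then ε * (1 - ε) / b else 1 - ε) '' Set.Ioo (0:ℝ) 1)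
      (1 / (4 * b)) := by
  have hb0 : (0:ℝ) < b := by linarith
  refine ⟨?_, ?_, ?_⟩
  · rintro ε ⟨hε0, hε1⟩ hεb
    constructor
    · rintro y ⟨x, rfl⟩
      have hx : (0:ℝ) < 1 + b * x ^ 2 := by positivity
      rw [div_le_div_iff₀ hb0 hx]
      nlinarith [sq_nonneg x, mul_pos hε0 (sub_pos.mpr hε1)]
    · intro w hw
      have hT : Filter.Tendsto
          (fun x : ℝ => (1 - ε) * (1 + ε * x ^ 2) / (1 + b * x ^ 2))
          Filter.atTop (nhds (ε * (1 - ε) / b)) := by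
        have h1 : Filter.Tendsto (fun x : ℝ => 1 + b * x ^ 2) Filter.atTop Filter.atTop := by
          apply Filter.tendsto_atTop_add_const_left
          exact (Filter.tendsto_pow_atTop (by norm_num)).const_mul_atTop hb0
        have h2 : Filter.Tendsto (fun x : ℝ => (1 + b * x ^ 2)⁻¹) Filter.atTop (nhds 0) :=
          h1.inv_tendsto_atTop
        have h3 : Filter.Tendsto
            (fun x : ℝ => ε * (1 - ε) / b + (1 - ε) * (b - ε) / b * (1 + b * x ^ 2)⁻¹)
            Filter.atTop (nhds (ε * (1 - ε) / b + (1 - ε) * (b - ε) / b * 0)) :=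
          tendsto_const_nhds.add (h2.const_mul _)
        rw [mul_zero, add_zero] at h3
        refine h3.congr fun x => ?_
        have hx : (1 + b * x ^ 2) ≠ 0 := by positivity
        field_simp
        ring
      exact ge_of_tendsto hT (Filter.Eventually.of_forall fun x => hw ⟨x, rfl⟩)
  · rintro ε ⟨hε0, hε1⟩ hbε
    apply IsLeast.isGLB
    constructor
    · exact ⟨0, by norm_num⟩
    · rintro y ⟨x, rfl⟩
      have hx : (0:ℝ) < 1 + b * x ^ 2 := by positivity
      rw [le_div_iff₀ hx]
      nlinarith [mul_nonneg (mul_nonneg (sub_nonneg.mpr hbε) (sq_nonneg x)) (sub_pos.mpr hε1).le]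
  · apply IsGreatest.isLUB
    constructor
    · refine ⟨1/2, ⟨by norm_num, by norm_num⟩, ?_⟩
      simp only [if_pos hb]
      field_simp
      ring
    · rintro y ⟨ε, ⟨hε0, hε1⟩, rfl⟩
      by_cases h : ε ≤ b
      · simp only [if_pos h]
        rw [div_le_div_iff₀ hb0 (by positivity)]
        nlinarith [sq_nonneg (2 * ε - 1)]
      · simp only [if_neg h]
        rw [le_div_iff₀ (by positivity)]
        push_neg at h
        nlinarith [sq_nonneg (2 * b - 1)]
end

section
/- Let μ be the standard Gaussian measure, b ≥ 1/2, and for ε ∈ (0,1) let f(x) = x e^{(1−ε)x²/4}. Then Var_μ(f) = ε^{-3/2} and ∫ f'(x)²/(1+bx²) dμ(x) ≤ (1−ε)²/(4b ε^{3/2}) + (1−ε+b)/(b√ε). Consequently the optimal weighted Poincaré constant is at most (1−ε)²/(4b) + (1−ε+b)ε/b, and letting ε → 0 gives at most 1/(4b). -/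
open Real MeasureTheory Filter
open scoped NNReal ENNReal

lemma gwp_exp_cocompact {c : ℝ} (hc : 0 < c) :
    Tendsto (fun x : ℝ => Real.exp (-c * x ^ 2)) (cocompact ℝ) (nhds 0) := by
  simpa using tendsto_rpow_abs_mul_exp_neg_mul_sq_cocompact hc 0

lemma gwp_mul_exp_cocompact {c : ℝ} (hc : 0 < c) :
    Tendsto (fun x : ℝ => x * Real.exp (-c * x ^ 2)) (cocompact ℝ) (nhds 0) := by
  have h := tendsto_rpow_abs_mul_exp_neg_mul_sq_cocompact hc 1
  simp only [Real.rpow_one] at h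
  apply squeeze_zero_norm _ h
  intro x
  rw [norm_mul, Real.norm_eq_abs, Real.norm_eq_abs, abs_of_nonneg (Real.exp_pos _).le]

lemma gwp_integral_x_mul_gauss {c : ℝ} (hc : 0 < c) :
    ∫ x : ℝ, x * Real.exp (-c * x ^ 2) = 0 := by
  have hderiv : ∀ x : ℝ, HasDerivAt (fun y : ℝ => -(2 * c)⁻¹ * Real.exp (-c * y ^ 2))
      (x * Real.exp (-c * x ^ 2)) x := by
    intro x
    have h := (((hasDerivAt_pow 2 x).const_mul (-c)).exp).const_mul (-(2 * c)⁻¹)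
    refine h.congr_deriv ?_
    have hc' : c ≠ 0 := hc.ne'
    field_simp
    ring
  have hco : Tendsto (fun y : ℝ => -(2 * c)⁻¹ * Real.exp (-c * y ^ 2)) (cocompact ℝ)
      (nhds 0) := by
    have := (gwp_exp_cocompact hc).const_mul (-(2 * c)⁻¹)
    simpa using this
  rw [cocompact_eq_atBot_atTop] at hco
  have h := integral_of_hasDerivAt_of_tendsto hderiv (integrable_mul_exp_neg_mul_sq hc)
    (hco.mono_left le_sup_left) (hco.mono_left le_sup_right)
  simpa using h

lemma gwp_integrable_sq_mul_gauss {c : ℝ} (hc : 0 < c) :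
    Integrable (fun x : ℝ => x ^ 2 * Real.exp (-c * x ^ 2)) := by
  have hint := (integrable_exp_neg_mul_sq (half_pos hc)).const_mul (2 / c)
  apply hint.mono' (Continuous.aestronglyMeasurable (by fun_prop))
  filter_upwards with x
  rw [Real.norm_eq_abs, abs_of_nonneg (by positivity)]
  have key : c / 2 * x ^ 2 * Real.exp (-(c / 2) * x ^ 2) ≤ 1 := by
    rw [show -(c / 2) * x ^ 2 = -(c / 2 * x ^ 2) by ring, Real.exp_neg, ← div_eq_mul_inv,
      div_le_one (Real.exp_pos _)]
    exact le_trans (by linarith) (Real.add_one_le_exp _)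
  have hexp : Real.exp (-c * x ^ 2) = Real.exp (-(c / 2) * x ^ 2) * Real.exp (-(c / 2) * x ^ 2) := by
    rw [← Real.exp_add]; ring_nf
  calc x ^ 2 * Real.exp (-c * x ^ 2)
      = (2 / c) * (c / 2 * x ^ 2 * Real.exp (-(c / 2) * x ^ 2)) * Real.exp (-(c / 2) * x ^ 2) := by
        rw [hexp]; field_simp
    _ ≤ (2 / c) * 1 * Real.exp (-(c / 2) * x ^ 2) := by
        apply mul_le_mul_of_nonneg_right _ (Real.exp_pos _).le
        exact mul_le_mul_of_nonneg_left key (by positivity)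
    _ = 2 / c * Real.exp (-(c / 2) * x ^ 2) := by ring

lemma gwp_integral_sq_mul_gauss {c : ℝ} (hc : 0 < c) :
    ∫ x : ℝ, x ^ 2 * Real.exp (-c * x ^ 2) = (2 * c)⁻¹ * Real.sqrt (π / c) := by
  have hderiv : ∀ x : ℝ, HasDerivAt (fun y : ℝ => -(2 * c)⁻¹ * (y * Real.exp (-c * y ^ 2)))
      (x ^ 2 * Real.exp (-c * x ^ 2) - (2 * c)⁻¹ * Real.exp (-c * x ^ 2)) x := by
    intro x
    have he : HasDerivAt (fun y : ℝ => Real.exp (-c * y ^ 2))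
        (Real.exp (-c * x ^ 2) * (-c * (2 * x ^ 1))) x :=
      ((hasDerivAt_pow 2 x).const_mul (-c)).exp
    have h := ((hasDerivAt_id x).mul he).const_mul (-(2 * c)⁻¹)
    refine h.congr_deriv ?_
    have hc' : c ≠ 0 := hc.ne'
    simp only [id_eq]
    field_simp
    ring
  have hint : Integrable (fun x : ℝ =>
      x ^ 2 * Real.exp (-c * x ^ 2) - (2 * c)⁻¹ * Real.exp (-c * x ^ 2)) :=
    (gwp_integrable_sq_mul_gauss hc).sub ((integrable_exp_neg_mul_sq hc).const_mul _)
  have hco : Tendsto (fun y : ℝ => -(2 * c)⁻¹ * (y * Real.exp (-c * y ^ 2))) (cocompact ℝ)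
      (nhds 0) := by
    have := (gwp_mul_exp_cocompact hc).const_mul (-(2 * c)⁻¹)
    simpa using this
  rw [cocompact_eq_atBot_atTop] at hco
  have h0 := integral_of_hasDerivAt_of_tendsto hderiv hint
    (hco.mono_left le_sup_left) (hco.mono_left le_sup_right)
  simp only [sub_zero] at h0
  have h1 := integral_sub (gwp_integrable_sq_mul_gauss hc)
    ((integrable_exp_neg_mul_sq hc).const_mul (2 * c)⁻¹)
  rw [h1, integral_const_mul, integral_gaussian] at h0
  linarith

lemma gwp_integral_conv (μ : Measure ℝ)
    (hμ : μ = MeasureTheory.volume.withDensity fun x =>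
      ENNReal.ofReal ((Real.sqrt (2 * π))⁻¹ * Real.exp (-(x ^ 2) / 2)))
    (g : ℝ → ℝ) :
    ∫ x, g x ∂μ = ∫ x, ((Real.sqrt (2 * π))⁻¹ * Real.exp (-(x ^ 2) / 2)) * g x := by
  subst hμ
  have hmeas : Measurable fun x : ℝ =>
      Real.toNNReal ((Real.sqrt (2 * π))⁻¹ * Real.exp (-(x ^ 2) / 2)) := by
    apply Measurable.real_toNNReal
    fun_prop
  have hrw : (fun x : ℝ => ENNReal.ofReal ((Real.sqrt (2 * π))⁻¹ * Real.exp (-(x ^ 2) / 2)))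
      = fun x => ((Real.toNNReal ((Real.sqrt (2 * π))⁻¹ * Real.exp (-(x ^ 2) / 2)) : ℝ≥0)
        : ℝ≥0∞) := rfl
  rw [hrw, integral_withDensity_eq_integral_smul hmeas]
  congr 1
  funext x
  rw [NNReal.smul_def, Real.coe_toNNReal _ (by positivity)]; rfl

lemma gwp_integrable_conv (μ : Measure ℝ)
    (hμ : μ = MeasureTheory.volume.withDensity fun x =>
      ENNReal.ofReal ((Real.sqrt (2 * π))⁻¹ * Real.exp (-(x ^ 2) / 2)))
    (g : ℝ → ℝ) :
    Integrable g μ ↔ Integrable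
      (fun x => ((Real.sqrt (2 * π))⁻¹ * Real.exp (-(x ^ 2) / 2)) * g x) volume := by
  subst hμ
  have hmeas : Measurable fun x : ℝ =>
      Real.toNNReal ((Real.sqrt (2 * π))⁻¹ * Real.exp (-(x ^ 2) / 2)) := by
    apply Measurable.real_toNNReal
    fun_prop
  have hrw : (fun x : ℝ => ENNReal.ofReal ((Real.sqrt (2 * π))⁻¹ * Real.exp (-(x ^ 2) / 2)))
      = fun x => ((Real.toNNReal ((Real.sqrt (2 * π))⁻¹ * Real.exp (-(x ^ 2) / 2)) : ℝ≥0)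
        : ℝ≥0∞) := rfl
  rw [hrw, integrable_withDensity_iff_integrable_smul hmeas]
  apply integrable_congr
  filter_upwards with x
  rw [NNReal.smul_def, Real.coe_toNNReal _ (by positivity)]; rfl

lemma gwp_aux (b ε : ℝ) (hb : 1/2 ≤ b) (hε : ε ∈ Set.Ioo (0:ℝ) 1) (μ : Measure ℝ)
    (hμ : μ = MeasureTheory.volume.withDensity fun x =>
      ENNReal.ofReal ((Real.sqrt (2 * π))⁻¹ * Real.exp (-(x ^ 2) / 2))) :
    (∫ x, (x * Real.exp ((1 - ε) * x ^ 2 / 4)) ^ 2 ∂μ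
        - (∫ x, x * Real.exp ((1 - ε) * x ^ 2 / 4) ∂μ) ^ 2) = ε ^ (-(3:ℝ)/2) ∧
    (∫ x, (deriv (fun x => x * Real.exp ((1 - ε) * x ^ 2 / 4)) x) ^ 2 / (1 + b * x ^ 2) ∂μ)
      ≤ (1 - ε) ^ 2 / (4 * b * ε ^ ((3:ℝ)/2)) + (1 - ε + b) / (b * Real.sqrt ε) ∧
    ContDiff ℝ (⊤ : ℕ∞) (fun x : ℝ => x * Real.exp ((1 - ε) * x ^ 2 / 4)) ∧
    MemLp (fun x : ℝ => x * Real.exp ((1 - ε) * x ^ 2 / 4)) 2 μ := by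
  obtain ⟨hε0, hε1⟩ := hε
  have hb0 : (0:ℝ) < b := lt_of_lt_of_le (by norm_num) hb
  have hεhalf : (0:ℝ) < ε / 2 := by linarith
  have hsq2π : (0:ℝ) < Real.sqrt (2 * π) := Real.sqrt_pos.2 (by positivity)
  have hsqε : (0:ℝ) < Real.sqrt ε := Real.sqrt_pos.2 hε0
  -- basic sqrt computation
  have hsqrt_div : Real.sqrt (π / (ε / 2)) = Real.sqrt (2 * π) / Real.sqrt ε := by
    rw [show π / (ε / 2) = 2 * π / ε by field_simp, Real.sqrt_div (by positivity)]
  -- the derivative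
  have hderiv : deriv (fun x : ℝ => x * Real.exp ((1 - ε) * x ^ 2 / 4))
      = fun x => Real.exp ((1 - ε) * x ^ 2 / 4) * (1 + (1 - ε) * x ^ 2 / 2) := by
    funext x
    have he : HasDerivAt (fun y : ℝ => Real.exp ((1 - ε) * y ^ 2 / 4))
        (Real.exp ((1 - ε) * x ^ 2 / 4) * ((1 - ε) * (2 * x ^ 1) / 4)) x :=
      (((hasDerivAt_pow 2 x).const_mul (1 - ε)).div_const 4).exp
    have h := (hasDerivAt_id' x).mul he
    rw [show (fun x : ℝ => x * Real.exp ((1 - ε) * x ^ 2 / 4))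
        = ((fun x => x) * fun y => Real.exp ((1 - ε) * y ^ 2 / 4)) from rfl, h.deriv]
    ring
  -- mean is zero
  have hmean : ∫ x, x * Real.exp ((1 - ε) * x ^ 2 / 4) ∂μ = 0 := by
    rw [gwp_integral_conv μ hμ]
    have hpt : (fun x : ℝ => ((Real.sqrt (2 * π))⁻¹ * Real.exp (-(x ^ 2) / 2))
        * (x * Real.exp ((1 - ε) * x ^ 2 / 4)))
        = fun x => (Real.sqrt (2 * π))⁻¹ * (x * Real.exp (-((1 + ε) / 4) * x ^ 2)) := by
      funext x
      have : Real.exp (-(x ^ 2) / 2) * Real.exp ((1 - ε) * x ^ 2 / 4)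
          = Real.exp (-((1 + ε) / 4) * x ^ 2) := by
        rw [← Real.exp_add]; ring_nf
      calc ((Real.sqrt (2 * π))⁻¹ * Real.exp (-(x ^ 2) / 2))
            * (x * Real.exp ((1 - ε) * x ^ 2 / 4))
          = (Real.sqrt (2 * π))⁻¹ * (x * (Real.exp (-(x ^ 2) / 2)
            * Real.exp ((1 - ε) * x ^ 2 / 4))) := by ring
        _ = _ := by rw [this]
    rw [hpt, integral_const_mul, gwp_integral_x_mul_gauss (by linarith : (0:ℝ) < (1 + ε) / 4),
      mul_zero]
  -- second moment
  have hsecond : ∫ x, (x * Real.exp ((1 - ε) * x ^ 2 / 4)) ^ 2 ∂μ = ε⁻¹ * (Real.sqrt ε)⁻¹ := by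
    rw [gwp_integral_conv μ hμ]
    have hpt : (fun x : ℝ => ((Real.sqrt (2 * π))⁻¹ * Real.exp (-(x ^ 2) / 2))
        * (x * Real.exp ((1 - ε) * x ^ 2 / 4)) ^ 2)
        = fun x => (Real.sqrt (2 * π))⁻¹ * (x ^ 2 * Real.exp (-(ε / 2) * x ^ 2)) := by
      funext x
      have : Real.exp (-(x ^ 2) / 2) * (Real.exp ((1 - ε) * x ^ 2 / 4)
          * Real.exp ((1 - ε) * x ^ 2 / 4)) = Real.exp (-(ε / 2) * x ^ 2) := by
        rw [← Real.exp_add, ← Real.exp_add]; ring_nf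
      calc ((Real.sqrt (2 * π))⁻¹ * Real.exp (-(x ^ 2) / 2))
            * (x * Real.exp ((1 - ε) * x ^ 2 / 4)) ^ 2
          = (Real.sqrt (2 * π))⁻¹ * (x ^ 2 * (Real.exp (-(x ^ 2) / 2)
            * (Real.exp ((1 - ε) * x ^ 2 / 4) * Real.exp ((1 - ε) * x ^ 2 / 4)))) := by ring
        _ = _ := by rw [this]
    rw [hpt, integral_const_mul, gwp_integral_sq_mul_gauss hεhalf, hsqrt_div]
    field_simp
  have hrpow32 : ε ^ ((3:ℝ)/2) = ε * Real.sqrt ε := by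
    rw [show ((3:ℝ)/2) = 1 + (1/2:ℝ) by norm_num, Real.rpow_add hε0, Real.rpow_one,
      ← Real.sqrt_eq_rpow]
  have hrpowneg : ε ^ (-(3:ℝ)/2) = ε⁻¹ * (Real.sqrt ε)⁻¹ := by
    rw [show (-(3:ℝ)/2) = -((3:ℝ)/2) by norm_num, Real.rpow_neg hε0.le, hrpow32, mul_inv]
  refine ⟨?_, ?_, ?_, ?_⟩
  · rw [hmean, hsecond, hrpowneg]
    norm_num
  · -- energy bound
    rw [gwp_integral_conv μ hμ, hderiv]
    set A : ℝ := (1 - ε) ^ 2 / (4 * b) with hA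
    set C : ℝ := (1 - ε + b) / b with hC
    have hA0 : 0 ≤ A := by positivity
    have hAb : A * b * 4 = (1 - ε) ^ 2 := by rw [hA]; field_simp
    have hCb : C * b = 1 - ε + b := by rw [hC]; field_simp
    have hC1 : 1 ≤ C := by rw [hC, le_div_iff₀ hb0]; linarith
    -- pointwise bound
    have hpoint : ∀ x : ℝ, ((Real.sqrt (2 * π))⁻¹ * Real.exp (-(x ^ 2) / 2))
        * ((Real.exp ((1 - ε) * x ^ 2 / 4) * (1 + (1 - ε) * x ^ 2 / 2)) ^ 2 / (1 + b * x ^ 2))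
        ≤ (Real.sqrt (2 * π))⁻¹ * (A * (x ^ 2 * Real.exp (-(ε / 2) * x ^ 2))
            + C * Real.exp (-(ε / 2) * x ^ 2)) := by
      intro x
      have hexp : Real.exp (-(x ^ 2) / 2) * (Real.exp ((1 - ε) * x ^ 2 / 4)
          * Real.exp ((1 - ε) * x ^ 2 / 4)) = Real.exp (-(ε / 2) * x ^ 2) := by
        rw [← Real.exp_add, ← Real.exp_add]; ring_nf
      have hb1x : (0:ℝ) < 1 + b * x ^ 2 := by positivity
      have hpoly : (1 + (1 - ε) * x ^ 2 / 2) ^ 2 / (1 + b * x ^ 2) ≤ A * x ^ 2 + C := by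
        rw [div_le_iff₀ hb1x]
        nlinarith [mul_nonneg hA0 (sq_nonneg x), mul_nonneg hb0.le (sq_nonneg x),
          sq_nonneg (x ^ 2), mul_nonneg (mul_nonneg hA0 hb0.le) (sq_nonneg (x ^ 2))]
      have hlhs : ((Real.sqrt (2 * π))⁻¹ * Real.exp (-(x ^ 2) / 2))
          * ((Real.exp ((1 - ε) * x ^ 2 / 4) * (1 + (1 - ε) * x ^ 2 / 2)) ^ 2
            / (1 + b * x ^ 2))
          = (Real.sqrt (2 * π))⁻¹ * (Real.exp (-(ε / 2) * x ^ 2)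
            * ((1 + (1 - ε) * x ^ 2 / 2) ^ 2 / (1 + b * x ^ 2))) := by
        rw [← hexp]; field_simp
      rw [hlhs]
      have h2 : Real.exp (-(ε / 2) * x ^ 2)
          * ((1 + (1 - ε) * x ^ 2 / 2) ^ 2 / (1 + b * x ^ 2))
          ≤ Real.exp (-(ε / 2) * x ^ 2) * (A * x ^ 2 + C) :=
        mul_le_mul_of_nonneg_left hpoly (Real.exp_pos _).le
      calc (Real.sqrt (2 * π))⁻¹ * (Real.exp (-(ε / 2) * x ^ 2)
            * ((1 + (1 - ε) * x ^ 2 / 2) ^ 2 / (1 + b * x ^ 2)))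
          ≤ (Real.sqrt (2 * π))⁻¹ * (Real.exp (-(ε / 2) * x ^ 2) * (A * x ^ 2 + C)) :=
            mul_le_mul_of_nonneg_left h2 (by positivity)
        _ = (Real.sqrt (2 * π))⁻¹ * (A * (x ^ 2 * Real.exp (-(ε / 2) * x ^ 2))
            + C * Real.exp (-(ε / 2) * x ^ 2)) := by ring
    -- integrability of the majorant
    have hGint : Integrable (fun x : ℝ => (Real.sqrt (2 * π))⁻¹
        * (A * (x ^ 2 * Real.exp (-(ε / 2) * x ^ 2)) + C * Real.exp (-(ε / 2) * x ^ 2))) :=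
      (((gwp_integrable_sq_mul_gauss hεhalf).const_mul A).add
        ((integrable_exp_neg_mul_sq hεhalf).const_mul C)).const_mul _
    -- integrability of the LHS
    have hLcont : Continuous (fun x : ℝ => ((Real.sqrt (2 * π))⁻¹ * Real.exp (-(x ^ 2) / 2))
        * ((Real.exp ((1 - ε) * x ^ 2 / 4) * (1 + (1 - ε) * x ^ 2 / 2)) ^ 2
          / (1 + b * x ^ 2))) := by
      apply Continuous.mul (by fun_prop)
      exact Continuous.div (by fun_prop) (by fun_prop) (fun x => by positivity)
    have hLnonneg : ∀ x : ℝ, 0 ≤ ((Real.sqrt (2 * π))⁻¹ * Real.exp (-(x ^ 2) / 2))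
        * ((Real.exp ((1 - ε) * x ^ 2 / 4) * (1 + (1 - ε) * x ^ 2 / 2)) ^ 2
          / (1 + b * x ^ 2)) := fun x => by positivity
    have hLint : Integrable (fun x : ℝ => ((Real.sqrt (2 * π))⁻¹ * Real.exp (-(x ^ 2) / 2))
        * ((Real.exp ((1 - ε) * x ^ 2 / 4) * (1 + (1 - ε) * x ^ 2 / 2)) ^ 2
          / (1 + b * x ^ 2))) := by
      apply hGint.mono' hLcont.aestronglyMeasurable
      filter_upwards with x
      rw [Real.norm_eq_abs, abs_of_nonneg (hLnonneg x)]
      exact hpoint x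
    have hmono := integral_mono hLint hGint hpoint
    refine le_trans hmono ?_
    rw [integral_const_mul, integral_add ((gwp_integrable_sq_mul_gauss hεhalf).const_mul A)
      ((integrable_exp_neg_mul_sq hεhalf).const_mul C), integral_const_mul, integral_const_mul,
      gwp_integral_sq_mul_gauss hεhalf, integral_gaussian, hsqrt_div, hrpow32]
    have h2π : Real.sqrt (2 * π) ≠ 0 := hsq2π.ne'
    have hsε' : Real.sqrt ε ≠ 0 := hsqε.ne'
    have hb' : b ≠ 0 := hb0.ne'
    have hε' : ε ≠ 0 := hε0.ne'
    apply le_of_eq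
    rw [hA, hC]
    field_simp
  · -- smoothness
    exact contDiff_id.mul (((contDiff_const.mul (contDiff_id.pow 2)).div_const 4).exp)
  · -- Memℒp
    have hcont : Continuous (fun x : ℝ => x * Real.exp ((1 - ε) * x ^ 2 / 4)) := by fun_prop
    rw [memLp_two_iff_integrable_sq (hcont.aestronglyMeasurable (μ := μ))]
    rw [gwp_integrable_conv μ hμ]
    have hpt : (fun x : ℝ => ((Real.sqrt (2 * π))⁻¹ * Real.exp (-(x ^ 2) / 2))
        * (x * Real.exp ((1 - ε) * x ^ 2 / 4)) ^ 2)
        = fun x => (Real.sqrt (2 * π))⁻¹ * (x ^ 2 * Real.exp (-(ε / 2) * x ^ 2)) := by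
      funext x
      have : Real.exp (-(x ^ 2) / 2) * (Real.exp ((1 - ε) * x ^ 2 / 4)
          * Real.exp ((1 - ε) * x ^ 2 / 4)) = Real.exp (-(ε / 2) * x ^ 2) := by
        rw [← Real.exp_add, ← Real.exp_add]; ring_nf
      calc ((Real.sqrt (2 * π))⁻¹ * Real.exp (-(x ^ 2) / 2))
            * (x * Real.exp ((1 - ε) * x ^ 2 / 4)) ^ 2
          = (Real.sqrt (2 * π))⁻¹ * (x ^ 2 * (Real.exp (-(x ^ 2) / 2)
            * (Real.exp ((1 - ε) * x ^ 2 / 4) * Real.exp ((1 - ε) * x ^ 2 / 4)))) := by ring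
        _ = _ := by rw [this]
    rw [hpt]
    exact (gwp_integrable_sq_mul_gauss hεhalf).const_mul _


/-- For the standard Gaussian measure, `b ≥ 1/2`, `ε ∈ (0,1)` and `f(x) = x e^{(1-ε)x²/4}`:
`Var_μ(f) = ε^{-3/2}`, the weighted energy of `f` is at most
`(1-ε)²/(4bε^{3/2}) + (1-ε+b)/(b√ε)`, hence any valid weighted Poincaré constant `l`
satisfies `l ≤ (1-ε)²/(4b) + (1-ε+b)ε/b`, and also `l ≤ 1/(4b)`. -/
theorem gaussian_weighted_poincare_upper (b ε : ℝ) (hb : 1/2 ≤ b) (hε : ε ∈ Set.Ioo (0:ℝ) 1)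
    (μ : Measure ℝ)
    (hμ : μ = MeasureTheory.volume.withDensity fun x =>
      ENNReal.ofReal ((Real.sqrt (2 * π))⁻¹ * Real.exp (-(x ^ 2) / 2)))
    (f : ℝ → ℝ) (hf : f = fun x => x * Real.exp ((1 - ε) * x ^ 2 / 4)) :
    (∫ x, f x ^ 2 ∂μ - (∫ x, f x ∂μ) ^ 2) = ε ^ (-(3:ℝ)/2) ∧
    (∫ x, (deriv f x) ^ 2 / (1 + b * x ^ 2) ∂μ)
      ≤ (1 - ε) ^ 2 / (4 * b * ε ^ ((3:ℝ)/2)) + (1 - ε + b) / (b * Real.sqrt ε) ∧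
    (∀ l : ℝ, 0 ≤ l →
      (∀ g : ℝ → ℝ, ContDiff ℝ (⊤ : ℕ∞) g → MemLp g 2 μ →
        l * (∫ x, g x ^ 2 ∂μ - (∫ x, g x ∂μ) ^ 2)
          ≤ ∫ x, (deriv g x) ^ 2 / (1 + b * x ^ 2) ∂μ) →
      l ≤ (1 - ε) ^ 2 / (4 * b) + (1 - ε + b) * ε / b ∧ l ≤ 1 / (4 * b)) := by
  subst hf
  have hb0 : (0:ℝ) < b := lt_of_lt_of_le (by norm_num) hb
  obtain ⟨hvar, henergy, _, _⟩ := gwp_aux b ε hb hε μ hμ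
  refine ⟨hvar, henergy, ?_⟩
  intro l hl hineq
  have key : ∀ δ, δ ∈ Set.Ioo (0:ℝ) 1 → l ≤ (1 - δ) ^ 2 / (4 * b) + (1 - δ + b) * δ / b := by
    intro δ hδ
    obtain ⟨hvarδ, henergyδ, hcd, hmem⟩ := gwp_aux b δ hb hδ μ hμ
    have h := hineq _ hcd hmem
    rw [hvarδ] at h
    have hδ0 : (0:ℝ) < δ := hδ.1
    have h2 : l * δ ^ (-(3:ℝ)/2)
        ≤ (1 - δ) ^ 2 / (4 * b * δ ^ ((3:ℝ)/2)) + (1 - δ + b) / (b * Real.sqrt δ) :=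
      h.trans henergyδ
    have hpow : (0:ℝ) < δ ^ ((3:ℝ)/2) := Real.rpow_pos_of_pos hδ0 _
    have h3 := mul_le_mul_of_nonneg_right h2 hpow.le
    have hid : l * δ ^ (-(3:ℝ)/2) * δ ^ ((3:ℝ)/2) = l := by
      rw [mul_assoc, ← Real.rpow_add hδ0]
      norm_num
    rw [hid] at h3
    refine h3.trans_eq ?_
    have hsδ : (0:ℝ) < Real.sqrt δ := Real.sqrt_pos.2 hδ0
    have h32 : δ ^ ((3:ℝ)/2) = δ * Real.sqrt δ := by
      rw [show ((3:ℝ)/2) = 1 + (1/2:ℝ) by norm_num, Real.rpow_add hδ0, Real.rpow_one,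
        ← Real.sqrt_eq_rpow]
    rw [h32]
    have hδ' : δ ≠ 0 := hδ0.ne'
    have hsδ' : Real.sqrt δ ≠ 0 := hsδ.ne'
    have hb' : b ≠ 0 := hb0.ne'
    field_simp
  refine ⟨key ε hε, ?_⟩
  haveI hne : (nhdsWithin (0:ℝ) (Set.Ioo 0 1)).NeBot := by
    apply mem_closure_iff_nhdsWithin_neBot.mp
    rw [closure_Ioo (by norm_num : (0:ℝ) ≠ 1)]
    exact ⟨le_refl 0, by norm_num⟩
  have htend : Filter.Tendsto (fun δ : ℝ => (1 - δ) ^ 2 / (4 * b) + (1 - δ + b) * δ / b)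
      (nhdsWithin 0 (Set.Ioo 0 1)) (nhds (1 / (4 * b))) := by
    have hc : Continuous fun δ : ℝ => (1 - δ) ^ 2 / (4 * b) + (1 - δ + b) * δ / b :=
      (((continuous_const.sub continuous_id).pow 2).div_const _).add
        ((((continuous_const.sub continuous_id).add continuous_const).mul
          continuous_id).div_const _)
    have h0 : ((1:ℝ) - 0) ^ 2 / (4 * b) + (1 - 0 + b) * 0 / b = 1 / (4 * b) := by norm_num
    have h1 := hc.tendsto 0
    rw [h0] at h1
    exact tendsto_nhdsWithin_of_tendsto_nhds h1
  exact ge_of_tendsto htend (by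
    filter_upwards [self_mem_nhdsWithin] with δ hδ using key δ hδ)
end

section
/- Let μ be the standard Gaussian measure on ℝ and γ ∈ [0, 1/2]. Then for every smooth compactly supported g, (γ + 1/2)·Var_μ(g) ≤ ∫ g'(x)² / (1 + (1/2 − γ)x²) dμ(x). -/
open Real MeasureTheory Set Filter Topology

namespace GWPF

noncomputable def E (x : ℝ) : ℝ := Real.exp (-(x ^ 2) / 2)

lemma E_pos (x : ℝ) : 0 < E x := Real.exp_pos _

lemma E_le_one (x : ℝ) : E x ≤ 1 := by
  rw [E]
  apply Real.exp_le_one_iff.2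
  nlinarith [sq_nonneg x]

lemma contE : Continuous E := by
  unfold E; fun_prop

lemma E_eq (x : ℝ) : E x = Real.exp (-(1/2) * x ^ 2) := by
  unfold E; congr 1; ring

lemma E_neg (x : ℝ) : E (-x) = E x := by
  unfold E; norm_num

lemma integrable_E : Integrable E := by
  have h := integrable_exp_neg_mul_sq (show (0:ℝ) < 1/2 by norm_num)
  exact h.congr (Eventually.of_forall fun x => (E_eq x).symm)

lemma integral_E : ∫ x, E x = Real.sqrt (2 * π) := by
  have h := integral_gaussian (1/2)
  simp_rw [← E_eq] at h
  rw [h]; congr 1; field_simp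

lemma hasDerivAt_E (x : ℝ) : HasDerivAt E (-x * E x) x := by
  have h1 : HasDerivAt (fun y : ℝ => -(y ^ 2) / 2) (-x) x := by
    have := ((hasDerivAt_pow 2 x).fun_neg.div_const 2)
    refine this.congr_deriv ?_
    norm_num; ring
  have h2 := h1.exp
  convert h2 using 1
  · rfl
  · unfold E; ring

set_option maxHeartbeats 1000000 in
lemma half (b : ℝ) (hb : 0 ≤ b) (g : ℝ → ℝ) (hg : ContDiff ℝ (⊤ : ℕ∞) g)
    (hsupp : HasCompactSupport g) :
    (1 - b) * ∫ x in Ioi (0:ℝ), (g x - g 0) ^ 2 * E x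
      ≤ ∫ x in Ioi (0:ℝ), (deriv g x) ^ 2 / (1 + b * x ^ 2) * E x := by
  have hgc : Continuous g := hg.continuous
  have hg' : Continuous (deriv g) := hg.continuous_deriv (by simp)
  have hdiff : Differentiable ℝ g := hg.differentiable (by simp)
  have hd : ∀ x : ℝ, HasDerivAt g (deriv g x) x := fun x => (hdiff x).hasDerivAt
  obtain ⟨L, hLpos, hL⟩ : ∃ L : ℝ, 0 < L ∧ ∀ x, |deriv g x| ≤ L := by
    obtain ⟨L0, hL0⟩ := hsupp.deriv.exists_bound_of_continuous hg'
    refine ⟨|L0| + 1, by positivity, fun x => ?_⟩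
    have := hL0 x
    rw [Real.norm_eq_abs] at this
    cases abs_cases L0 <;> linarith
  obtain ⟨M, hMpos, hM⟩ : ∃ M : ℝ, 0 < M ∧ ∀ x, |g x - g 0| ≤ M := by
    obtain ⟨M0, hM0⟩ := hsupp.exists_bound_of_continuous hgc
    refine ⟨2 * |M0| + 1, by positivity, fun x => ?_⟩
    have h1 := hM0 x; have h2 := hM0 0
    rw [Real.norm_eq_abs] at h1 h2
    cases abs_cases M0 <;> cases abs_cases (g x) <;> cases abs_cases (g 0) <;>
      cases abs_cases (g x - g 0) <;> linarith
  have hLip : ∀ x : ℝ, |g x - g 0| ≤ L * |x| := by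
    intro x
    have := Convex.norm_image_sub_le_of_norm_deriv_le (s := (univ : Set ℝ))
      (fun y _ => hdiff y) (fun y _ => by rw [Real.norm_eq_abs]; exact hL y)
      convex_univ (mem_univ 0) (mem_univ x)
    simpa using this
  -- weight positivity
  have hw : ∀ x : ℝ, (0:ℝ) < 1 + b * x ^ 2 := fun x => by nlinarith [sq_nonneg x]
  -- the functions
  set F : ℝ → ℝ := fun x => (g x - g 0) ^ 2 * E x / x with hF
  set F' : ℝ → ℝ := fun x =>
    2 * (g x - g 0) * deriv g x * E x / x - (g x - g 0) ^ 2 * E x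
      - (g x - g 0) ^ 2 * E x / x ^ 2 with hF'
  have hderiv : ∀ x ∈ Ioi (0:ℝ), HasDerivAt F (F' x) x := by
    intro x hx
    have hx0 : x ≠ 0 := ne_of_gt hx
    have h1 : HasDerivAt (fun y => (g y - g 0) ^ 2)
        (2 * (g x - g 0) ^ 1 * deriv g x) x := by
      have := ((hd x).sub_const (g 0)).fun_pow 2
      simpa using this
    have h2 : HasDerivAt (fun y => (g y - g 0) ^ 2 * E y)
        (2 * (g x - g 0) ^ 1 * deriv g x * E x + (g x - g 0) ^ 2 * (-x * E x)) x :=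
      h1.mul (hasDerivAt_E x)
    have h3 : HasDerivAt (fun y : ℝ => y⁻¹) (-(x ^ 2)⁻¹) x := hasDerivAt_inv hx0
    have h4 := h2.mul h3
    have h5 : HasDerivAt F
        ((2 * (g x - g 0) ^ 1 * deriv g x * E x + (g x - g 0) ^ 2 * (-x * E x)) * x⁻¹
          + (g x - g 0) ^ 2 * E x * -(x ^ 2)⁻¹) x := by
      refine h4.congr_of_eventuallyEq ?_
      filter_upwards [] with y
      rw [hF]; simp [div_eq_mul_inv]
    convert h5 using 1
    rw [hF']
    field_simp
    ring
  -- integrability facts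
  have haemF' : AEStronglyMeasurable F' (volume.restrict (Ioi (0:ℝ))) := by
    apply ContinuousOn.aestronglyMeasurable _ measurableSet_Ioi
    rw [hF']
    have c0 : Continuous (fun x => 2 * (g x - g 0) * deriv g x * E x) :=
      (((continuous_const.mul (hgc.sub continuous_const)).mul hg').mul contE)
    have c1 : Continuous (fun x => (g x - g 0) ^ 2 * E x) :=
      ((hgc.sub continuous_const).pow 2).mul contE
    apply ContinuousOn.sub
    apply ContinuousOn.sub
    · exact ContinuousOn.div c0.continuousOn continuousOn_id (fun x hx => ne_of_gt hx)
    · exact c1.continuousOn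
    · exact ContinuousOn.div c1.continuousOn ((continuous_pow 2).continuousOn)
        (fun x hx => pow_ne_zero 2 (ne_of_gt hx))
  have hboundF' : ∀ x ∈ Ioi (0:ℝ), ‖F' x‖ ≤ (2 * L * L + M * M + L * L) * E x := by
    intro x hx
    have hx0 : (0:ℝ) < x := hx
    have hhx : |g x - g 0| ≤ L * x := by
      have := hLip x; rwa [abs_of_pos hx0] at this
    have hEp := E_pos x
    have e1 : |2 * (g x - g 0) * deriv g x * E x / x| ≤ 2 * L * L * E x := by
      rw [abs_div, abs_of_pos hx0, div_le_iff₀ hx0]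
      rw [abs_mul, abs_mul, abs_mul, abs_of_pos hEp]
      have : |(2:ℝ)| = 2 := by norm_num
      rw [this]
      have h1 : |g x - g 0| * |deriv g x| * E x ≤ (L * x) * L * E x := by
        apply mul_le_mul_of_nonneg_right _ hEp.le
        exact mul_le_mul hhx (hL x) (abs_nonneg _) (by positivity)
      nlinarith
    have e2 : |(g x - g 0) ^ 2 * E x| ≤ M * M * E x := by
      rw [abs_mul, abs_of_pos hEp, abs_pow]
      nlinarith [mul_self_le_mul_self (abs_nonneg (g x - g 0)) (hM x), hEp.le]
    have e3 : |(g x - g 0) ^ 2 * E x / x ^ 2| ≤ L * L * E x := by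
      rw [abs_div, abs_of_pos (by positivity : (0:ℝ) < x ^ 2), div_le_iff₀ (by positivity : (0:ℝ) < x ^ 2)]
      rw [abs_mul, abs_of_pos hEp, abs_pow]
      nlinarith [mul_self_le_mul_self (abs_nonneg (g x - g 0)) hhx, hEp.le]
    have hFx : F' x = 2 * (g x - g 0) * deriv g x * E x / x - (g x - g 0) ^ 2 * E x
        - (g x - g 0) ^ 2 * E x / x ^ 2 := by rw [hF']
    rw [Real.norm_eq_abs, hFx]
    have t1 : |2 * (g x - g 0) * deriv g x * E x / x - (g x - g 0) ^ 2 * E x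
          - (g x - g 0) ^ 2 * E x / x ^ 2|
        ≤ |2 * (g x - g 0) * deriv g x * E x / x| + (|(g x - g 0) ^ 2 * E x|
          + |(g x - g 0) ^ 2 * E x / x ^ 2|) := by
      have hrw : 2 * (g x - g 0) * deriv g x * E x / x - (g x - g 0) ^ 2 * E x
          - (g x - g 0) ^ 2 * E x / x ^ 2
          = 2 * (g x - g 0) * deriv g x * E x / x + (-((g x - g 0) ^ 2 * E x)
            + -((g x - g 0) ^ 2 * E x / x ^ 2)) := by ring
      rw [hrw]
      refine (abs_add_le _ _).trans ?_
      gcongr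
      refine (abs_add_le _ _).trans ?_
      simp [abs_neg]
    refine t1.trans ?_
    have hexp : (2 * L * L + M * M + L * L) * E x
        = 2 * L * L * E x + (M * M * E x + L * L * E x) := by ring
    rw [hexp]
    linarith [e1, e2, e3]
  have hintF' : IntegrableOn F' (Ioi (0:ℝ)) := by
    apply Integrable.mono' ((integrable_E.const_mul (2 * L * L + M * M + L * L)).integrableOn)
      haemF'
    rw [ae_restrict_iff' measurableSet_Ioi]
    exact Eventually.of_forall hboundF'
  have hintH : Integrable (fun x => (g x - g 0) ^ 2 * E x) := by
    apply Integrable.mono' (integrable_E.const_mul (M * M))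
      (((hgc.sub continuous_const).pow 2).mul contE).aestronglyMeasurable
    filter_upwards [] with x
    simp only [Pi.mul_apply, Pi.pow_apply, Pi.sub_apply]
    rw [Real.norm_eq_abs, abs_mul, abs_of_pos (E_pos x), abs_pow]
    nlinarith [mul_self_le_mul_self (abs_nonneg (g x - g 0)) (hM x), (E_pos x).le]
  have hintR : Integrable (fun x => (deriv g x) ^ 2 / (1 + b * x ^ 2) * E x) := by
    apply Continuous.integrable_of_hasCompactSupport
    · exact ((hg'.pow 2).div (by fun_prop) (fun x => ne_of_gt (hw x))).mul contE
    · apply hsupp.deriv.mono'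
      intro x hx
      by_contra hc
      exact hx (by simp [image_eq_zero_of_notMem_tsupport hc])
  -- FTC
  have hF0 : F 0 = 0 := by rw [hF]; simp
  have hcont : ContinuousWithinAt F (Ici (0:ℝ)) 0 := by
    rw [ContinuousWithinAt, hF0]
    apply squeeze_zero' (f := F) (g := fun x => L * L * x)
    · filter_upwards [self_mem_nhdsWithin] with x (hx : x ∈ Ici (0:ℝ))
      rw [hF]
      exact div_nonneg (mul_nonneg (sq_nonneg _) (E_pos x).le) hx
    · filter_upwards [self_mem_nhdsWithin] with x (hx : x ∈ Ici (0:ℝ))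
      rcases eq_or_lt_of_le (mem_Ici.mp hx) with h | h
      · rw [hF, ← h]
        simp
      · rw [hF, div_le_iff₀ h]
        have h1 : |g x - g 0| ≤ L * x := by
          have := hLip x; rwa [abs_of_pos h] at this
        have h2 : (g x - g 0) ^ 2 ≤ (L * x) ^ 2 := by
          rw [← sq_abs]; exact pow_le_pow_left₀ (abs_nonneg _) h1 2
        nlinarith [E_le_one x, (E_pos x).le, sq_nonneg (g x - g 0)]
    · have h1 : Tendsto (fun x : ℝ => L * L * x) (𝓝 0) (𝓝 (L * L * 0)) :=
        (continuous_const.mul continuous_id).tendsto 0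
      rw [mul_zero] at h1
      exact h1.mono_left nhdsWithin_le_nhds
  have htop : Tendsto F atTop (𝓝 0) := by
    apply squeeze_zero' (f := F) (g := fun x => M * M * E x)
    · filter_upwards [eventually_ge_atTop (1:ℝ)] with x hx
      rw [hF]
      exact div_nonneg (mul_nonneg (sq_nonneg _) (E_pos x).le) (by linarith)
    · filter_upwards [eventually_ge_atTop (1:ℝ)] with x hx
      rw [hF, div_le_iff₀ (by linarith : (0:ℝ) < x)]
      have h2 : (g x - g 0) ^ 2 ≤ M * M := by
        rw [← sq_abs]; nlinarith [mul_self_le_mul_self (abs_nonneg (g x - g 0)) (hM x)]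
      have h3 : (0:ℝ) ≤ M * M * E x := mul_nonneg (by positivity) (E_pos x).le
      calc (g x - g 0) ^ 2 * E x ≤ M * M * E x :=
            mul_le_mul_of_nonneg_right h2 (E_pos x).le
        _ = M * M * E x * 1 := by ring
        _ ≤ M * M * E x * x := mul_le_mul_of_nonneg_left hx h3
    · have h1 : Tendsto E atTop (𝓝 0) := by
        unfold E
        apply Real.tendsto_exp_atBot.comp
        apply Tendsto.atBot_div_const (by norm_num : (0:ℝ) < 2)
        apply tendsto_neg_atTop_atBot.comp
        exact tendsto_pow_atTop (by norm_num)
      have := h1.const_mul (M * M)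
      simpa using this
  have hFTC : ∫ x in Ioi (0:ℝ), F' x = 0 := by
    rw [integral_Ioi_of_hasDerivAt_of_tendsto hcont hderiv hintF' htop, hF0, sub_zero]
  -- pointwise inequality
  have hpt : ∀ x ∈ Ioi (0:ℝ),
      (1 - b) * ((g x - g 0) ^ 2 * E x) + F' x
        ≤ (deriv g x) ^ 2 / (1 + b * x ^ 2) * E x := by
    intro x hx
    have hx0 : (0:ℝ) < x := hx
    have hwx := hw x
    have hx0' : x ≠ 0 := ne_of_gt hx0
    have hwx' : 1 + b * x ^ 2 ≠ 0 := ne_of_gt hwx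
    have hFx : F' x = 2 * (g x - g 0) * deriv g x * E x / x - (g x - g 0) ^ 2 * E x
        - (g x - g 0) ^ 2 * E x / x ^ 2 := by rw [hF']
    have key : (deriv g x) ^ 2 / (1 + b * x ^ 2) * E x
        - ((1 - b) * ((g x - g 0) ^ 2 * E x) + F' x)
        = E x * (deriv g x * x - (1 + b * x ^ 2) * (g x - g 0)) ^ 2
            / ((1 + b * x ^ 2) * x ^ 2) := by
      rw [hFx]
      field_simp
      ring
    nlinarith [key, E_pos x, sq_nonneg (deriv g x * x - (1 + b * x ^ 2) * (g x - g 0)),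
      mul_pos hwx (by positivity : (0:ℝ) < x ^ 2),
      div_nonneg (mul_nonneg (E_pos x).le
        (sq_nonneg (deriv g x * x - (1 + b * x ^ 2) * (g x - g 0))))
        (mul_nonneg hwx.le (sq_nonneg x))]
  -- conclude
  have hsum : IntegrableOn (fun x => (1 - b) * ((g x - g 0) ^ 2 * E x) + F' x) (Ioi (0:ℝ)) :=
    ((hintH.integrableOn).const_mul _).add hintF'
  have hmono := setIntegral_mono_on hsum hintR.integrableOn measurableSet_Ioi hpt
  rw [integral_add ((hintH.integrableOn).const_mul _) hintF', hFTC, add_zero,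
    integral_const_mul] at hmono
  exact hmono

lemma hcs_aux {f h : ℝ → ℝ} (hs : HasCompactSupport f)
    (hzero : ∀ x, f x = 0 → h x = 0) : HasCompactSupport h := by
  apply hs.mono'
  intro x hx
  by_contra hc
  exact hx (hzero x (image_eq_zero_of_notMem_tsupport hc))

lemma integrable_mulE (f : ℝ → ℝ) (hc : Continuous f) (hs : HasCompactSupport f) :
    Integrable (fun x => f x * E x) := by
  apply Continuous.integrable_of_hasCompactSupport (hc.mul contE)
  exact hcs_aux hs (fun x hx => by simp [hx])

lemma integrable_sq_E (g : ℝ → ℝ) (hgc : Continuous g) (c : ℝ) :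
    Integrable (fun x => (g x - c) ^ 2 * E x) ∨ True := Or.inr trivial

lemma whole (b : ℝ) (hb : 0 ≤ b) (g : ℝ → ℝ) (hg : ContDiff ℝ (⊤ : ℕ∞) g)
    (hsupp : HasCompactSupport g) :
    (1 - b) * ∫ x, (g x - g 0) ^ 2 * E x
      ≤ ∫ x, (deriv g x) ^ 2 / (1 + b * x ^ 2) * E x := by
  have hgc : Continuous g := hg.continuous
  have hg' : Continuous (deriv g) := hg.continuous_deriv (by simp)
  have hw : ∀ x : ℝ, (0:ℝ) < 1 + b * x ^ 2 := fun x => by nlinarith [sq_nonneg x]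
  obtain ⟨M, hM⟩ := hsupp.exists_bound_of_continuous hgc
  have hintH : Integrable (fun x => (g x - g 0) ^ 2 * E x) := by
    apply Integrable.mono' (integrable_E.const_mul ((M + M) * (M + M)))
      (((hgc.sub continuous_const).pow 2).mul contE).aestronglyMeasurable
    filter_upwards [] with x
    have h1 := hM x; have h2 := hM 0
    rw [Real.norm_eq_abs] at h1 h2
    simp only [Pi.mul_apply, Pi.pow_apply, Pi.sub_apply]
    rw [Real.norm_eq_abs, abs_mul, abs_of_pos (E_pos x), abs_pow]
    have h3 : |g x - g 0| ≤ M + M := by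
      cases abs_cases (g x) <;> cases abs_cases (g 0) <;> cases abs_cases (g x - g 0) <;> linarith
    nlinarith [mul_self_le_mul_self (abs_nonneg (g x - g 0)) h3, (E_pos x).le]
  have hintR : Integrable (fun x => (deriv g x) ^ 2 / (1 + b * x ^ 2) * E x) := by
    apply Continuous.integrable_of_hasCompactSupport
    · exact ((hg'.pow 2).div (by fun_prop) (fun x => ne_of_gt (hw x))).mul contE
    · exact hcs_aux hsupp.deriv (fun x hx => by simp [hx])
  set G : ℝ → ℝ := fun x => g (-x) with hG
  have hGc : ContDiff ℝ (⊤ : ℕ∞) G := hg.comp contDiff_neg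
  have hGsupp : HasCompactSupport G := hsupp.comp_homeomorph (Homeomorph.neg ℝ)
  have hGd : ∀ x : ℝ, deriv G x = -deriv g (-x) := by
    intro x
    have h1 : HasDerivAt G (deriv g (-x) * -1) x :=
      HasDerivAt.comp x ((hg.differentiable (by simp)) (-x)).hasDerivAt (hasDerivAt_neg x)
    simpa using h1.deriv
  have hG0 : G 0 = g 0 := by rw [hG]; norm_num
  have h1 := half b hb G hGc hGsupp
  have h2 := half b hb g hg hsupp
  have e1 : ∫ x in Ioi (0:ℝ), (G x - G 0) ^ 2 * E x
      = ∫ x in Iic (0:ℝ), (g x - g 0) ^ 2 * E x := by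
    have := integral_comp_neg_Ioi (0:ℝ) (fun y => (g y - g 0) ^ 2 * E y)
    rw [neg_zero] at this
    rw [← this]
    apply setIntegral_congr_fun measurableSet_Ioi
    intro x _
    simp only [hG, hG0, E_neg]
    norm_num
  have e2 : ∫ x in Ioi (0:ℝ), (deriv G x) ^ 2 / (1 + b * x ^ 2) * E x
      = ∫ x in Iic (0:ℝ), (deriv g x) ^ 2 / (1 + b * x ^ 2) * E x := by
    have := integral_comp_neg_Ioi (0:ℝ) (fun y => (deriv g y) ^ 2 / (1 + b * y ^ 2) * E y)
    rw [neg_zero] at this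
    rw [← this]
    apply setIntegral_congr_fun measurableSet_Ioi
    intro x _
    simp only [hGd, E_neg]
    ring
  rw [e1, e2] at h1
  rw [← intervalIntegral.integral_Iic_add_Ioi (b := (0:ℝ)) hintH.integrableOn
      hintH.integrableOn,
    ← intervalIntegral.integral_Iic_add_Ioi (b := (0:ℝ)) hintR.integrableOn
      hintR.integrableOn]
  linarith

end GWPF

open GWPF

/-- Family of weighted Poincaré inequalities for the standard Gaussian measure: for
`γ ∈ [0,1/2]`, `(γ + 1/2) Var_μ(g) ≤ ∫ g'(x)²/(1 + (1/2 - γ)x²) dμ(x)` for every smooth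
compactly supported `g`. -/
theorem gaussian_weighted_poincare_family (γ : ℝ) (hγ : γ ∈ Set.Icc (0:ℝ) (1/2))
    (μ : Measure ℝ)
    (hμ : μ = MeasureTheory.volume.withDensity fun x =>
      ENNReal.ofReal ((Real.sqrt (2 * π))⁻¹ * Real.exp (-(x ^ 2) / 2))) :
    ∀ g : ℝ → ℝ, ContDiff ℝ (⊤ : ℕ∞) g → HasCompactSupport g →
      (γ + 1/2) * (∫ x, g x ^ 2 ∂μ - (∫ x, g x ∂μ) ^ 2)
        ≤ ∫ x, (deriv g x) ^ 2 / (1 + (1/2 - γ) * x ^ 2) ∂μ := by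
  intro g hg hsupp
  obtain ⟨hγ0, hγ1⟩ := hγ
  have hgc : Continuous g := hg.continuous
  set Z : ℝ := Real.sqrt (2 * π) with hZdef
  have hZ : 0 < Z := Real.sqrt_pos.2 (by positivity)
  set c : ℝ := Z⁻¹ with hcdef
  have hc : 0 < c := by positivity
  have hcZ : c * Z = 1 := inv_mul_cancel₀ (ne_of_gt hZ)
  have conv : ∀ f : ℝ → ℝ, ∫ x, f x ∂μ = c * ∫ x, f x * E x := by
    intro f
    rw [hμ]
    have hmeas : Measurable (fun x : ℝ => ((Real.sqrt (2 * π))⁻¹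
        * Real.exp (-(x ^ 2) / 2)).toNNReal) := by
      apply Measurable.real_toNNReal
      fun_prop
    rw [show (fun x : ℝ => ENNReal.ofReal ((Real.sqrt (2 * π))⁻¹ * Real.exp (-(x ^ 2) / 2)))
        = (fun x : ℝ => ((((Real.sqrt (2 * π))⁻¹ * Real.exp (-(x ^ 2) / 2)).toNNReal : NNReal)
          : ENNReal)) from rfl]
    rw [integral_withDensity_eq_integral_smul hmeas f]
    rw [← integral_const_mul]
    congr 1
    funext x
    rw [NNReal.smul_def, Real.coe_toNNReal _ (by positivity)]
    show (Real.sqrt (2 * π))⁻¹ * Real.exp (-(x ^ 2) / 2) * f x = c * (f x * E x)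
    rw [E, hcdef, hZdef]
    ring
  set b : ℝ := 1/2 - γ with hbdef
  have hb0 : 0 ≤ b := by rw [hbdef]; linarith
  have h1b : 0 ≤ 1 - b := by rw [hbdef]; linarith
  have hgb : γ + 1/2 = 1 - b := by rw [hbdef]; ring
  have hmain := whole b hb0 g hg hsupp
  set A : ℝ := ∫ x, g x ^ 2 * E x with hA
  set B : ℝ := ∫ x, g x * E x with hB
  set R : ℝ := ∫ x, (deriv g x) ^ 2 / (1 + b * x ^ 2) * E x with hR
  set H : ℝ := ∫ x, (g x - g 0) ^ 2 * E x with hH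
  have int_gE : Integrable (fun x => g x * E x) := integrable_mulE g hgc hsupp
  have int_g2E : Integrable (fun x => g x ^ 2 * E x) := by
    have := integrable_mulE (fun x => g x ^ 2) (hgc.pow 2)
      (hcs_aux hsupp (fun x hx => by simp [hx]))
    exact this
  have hHexp : H = A - 2 * g 0 * B + g 0 ^ 2 * Z := by
    have hint1 : Integrable (fun x => 2 * g 0 * (g x * E x)) := int_gE.const_mul _
    have hint2 : Integrable (fun x => g x ^ 2 * E x - 2 * g 0 * (g x * E x)) :=
      int_g2E.sub hint1
    have hint3 : Integrable (fun x => g 0 ^ 2 * E x) := integrable_E.const_mul _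
    rw [hH]
    rw [show (fun x => (g x - g 0) ^ 2 * E x)
        = fun x => (g x ^ 2 * E x - 2 * g 0 * (g x * E x)) + g 0 ^ 2 * E x from
      funext fun x => by ring]
    rw [integral_add hint2 hint3, integral_sub int_g2E hint1, integral_const_mul,
      integral_const_mul, integral_E, ← hA, ← hB, ← hZdef]
  have c1 : ∫ x, g x ^ 2 ∂μ = c * A := conv (fun x => g x ^ 2)
  have c2 : ∫ x, g x ∂μ = c * B := conv g
  have c3 : ∫ x, (deriv g x) ^ 2 / (1 + b * x ^ 2) ∂μ = c * R :=
    conv (fun x => (deriv g x) ^ 2 / (1 + b * x ^ 2))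
  rw [hgb, c1, c2, c3]
  have key : (1 - b) * (c * A - (c * B) ^ 2)
      = c * ((1 - b) * H) - (1 - b) * (c ^ 2 * (B - Z * g 0) ^ 2) := by
    rw [hHexp]
    linear_combination (-(1 - b) * (2 * c * g 0 * B - c * Z * g 0 ^ 2)) * hcZ
  have hnn : 0 ≤ (1 - b) * (c ^ 2 * (B - Z * g 0) ^ 2) :=
    mul_nonneg h1b (mul_nonneg (sq_nonneg _) (sq_nonneg _))
  have hcr := mul_le_mul_of_nonneg_left hmain hc.le
  linarith [key, hnn, hcr]
end

section
/- Let β > 1/2, ε < (2β−3)/4, a = β − 2ε, μ the generalized Cauchy distribution with density Z^{-1}(1+x²)^{-β}, and f(x) = x(1+x²)^ε. Then the Rayleigh quotient (∫ (1+x²) f'² dμ) / Var_μ(f) equals 2(β−1) + 6ε²/(β−2ε). -/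
open Real MeasureTheory Filter Topology

/-! Write `a = β - 2ε` and `I(p) = ∫ (1+x²)^(-p)`. The mean of `f` vanishes since `f` is odd, and
via `x² = (1+x²) - 1` and `1 + (1+2ε)x² = (1+2ε)(1+x²) - 2ε` the second moment and the weighted
energy become combinations of `I(a-1)`, `I(a)`, `I(a+1)`. Integrating
`(x(1+x²)^(-p))' = (1-2p)(1+x²)^(-p) + 2p(1+x²)^(-(p+1))` over the line gives
`I(p+1) = (2p-1)/(2p) · I(p)`, so both integrals are explicit multiples of `I(a-1)` and the
quotient is a rational identity in `a` and `ε`. -/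

theorem integral_eq_zero_of_odd {g : ℝ → ℝ} (hg : ∀ x, g (-x) = -g x) : ∫ x, g x = 0 := by
  have h := integral_neg_eq_self g volume
  simp only [hg, integral_neg] at h
  linarith

theorem integral_withDensity_ofReal_eq_integral_mul {X : Type*} [MeasurableSpace X]
    {μ : Measure X} {ρ : X → ℝ} (hρ : Measurable ρ) (hρ₀ : ∀ x, 0 ≤ ρ x) (g : X → ℝ) :
    ∫ x, g x ∂μ.withDensity (fun x => ENNReal.ofReal (ρ x)) = ∫ x, ρ x * g x ∂μ := by
  rw [integral_withDensity_eq_integral_toReal_smul hρ.ennreal_ofReal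
    (ae_of_all _ fun _ => ENNReal.ofReal_lt_top)]
  simp only [ENNReal.toReal_ofReal (hρ₀ _), smul_eq_mul]

theorem integrable_one_add_sq_rpow_neg {p : ℝ} (hp : 1/2 < p) :
    Integrable fun x : ℝ => (1 + x ^ 2) ^ (-p) := by
  have h := integrable_rpow_neg_one_add_norm_sq (E := ℝ) (μ := volume) (r := 2 * p)
    (by rw [Module.finrank_self, Nat.cast_one]; linarith)
  simpa only [Real.norm_eq_abs, sq_abs, show -(2 * p) / 2 = -p by ring] using h

theorem integral_one_add_sq_rpow_neg_pos {p : ℝ} (hp : 1/2 < p) :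
    0 < ∫ x : ℝ, (1 + x ^ 2) ^ (-p) :=
  integral_pos_of_integrable_nonneg_nonzero (x := 0)
    ((continuous_const.add (continuous_pow 2)).rpow_const fun x =>
      Or.inl (by positivity : (0 : ℝ) < 1 + x ^ 2).ne')
    (integrable_one_add_sq_rpow_neg hp) (fun _ => by positivity) (by positivity)

theorem hasDerivAt_mul_one_add_sq_rpow (s x : ℝ) :
    HasDerivAt (fun x => x * (1 + x ^ 2) ^ s)
      ((1 + x ^ 2) ^ (s - 1) * (1 + (1 + 2 * s) * x ^ 2)) x := by
  have hy : 0 < 1 + x ^ 2 := by positivity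
  have hbase : HasDerivAt (fun x : ℝ => 1 + x ^ 2) (2 * x) x := by
    simpa using (hasDerivAt_pow 2 x).const_add 1
  refine ((hasDerivAt_id x).mul (hbase.rpow_const (p := s) (Or.inl hy.ne'))).congr_deriv ?_
  rw [id, rpow_sub_one hy.ne']
  field_simp
  ring

theorem tendsto_mul_one_add_sq_rpow_neg_cocompact {p : ℝ} (hp : 1/2 < p) :
    Tendsto (fun x : ℝ => x * (1 + x ^ 2) ^ (-p)) (cocompact ℝ) (𝓝 0) := by
  have hbase : Tendsto (fun x : ℝ => 1 + x ^ 2) (cocompact ℝ) atTop := by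
    refine tendsto_atTop_add_const_left _ 1 ?_
    simpa only [Function.comp_def, Real.norm_eq_abs, sq_abs] using
      (tendsto_pow_atTop two_ne_zero).comp (tendsto_norm_cocompact_atTop (E := ℝ))
  have hdecay : Tendsto (fun x : ℝ => (1 + x ^ 2) ^ (-(p - 1/2))) (cocompact ℝ) (𝓝 0) :=
    (tendsto_rpow_neg_atTop (by linarith)).comp hbase
  refine squeeze_zero_norm (fun x => ?_) hdecay
  have hy : 0 < 1 + x ^ 2 := by positivity
  calc ‖x * (1 + x ^ 2) ^ (-p)‖ = |x| * (1 + x ^ 2) ^ (-p) := by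
        rw [norm_mul, Real.norm_eq_abs, Real.norm_of_nonneg (by positivity)]
    _ ≤ (1 + x ^ 2) ^ (1/2 : ℝ) * (1 + x ^ 2) ^ (-p) := by
        gcongr
        rw [← sqrt_eq_rpow]
        exact abs_le_sqrt (by linarith)
    _ = (1 + x ^ 2) ^ (-(p - 1/2)) := by rw [← rpow_add hy]; ring_nf

theorem integral_one_add_sq_rpow_neg_add_one {p : ℝ} (hp : 1/2 < p) :
    ∫ x : ℝ, (1 + x ^ 2) ^ (-(p + 1))
      = (2 * p - 1) / (2 * p) * ∫ x : ℝ, (1 + x ^ 2) ^ (-p) := by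
  have hderiv : ∀ x : ℝ, HasDerivAt (fun x => x * (1 + x ^ 2) ^ (-p))
      ((1 - 2 * p) * (1 + x ^ 2) ^ (-p) + 2 * p * (1 + x ^ 2) ^ (-(p + 1))) x := by
    intro x
    refine (hasDerivAt_mul_one_add_sq_rpow (-p) x).congr_deriv ?_
    have hy : 0 < 1 + x ^ 2 := by positivity
    rw [show -(p + 1) = -p - 1 by ring, rpow_sub_one hy.ne']
    field_simp
    ring
  have hI := (integrable_one_add_sq_rpow_neg hp).const_mul (1 - 2 * p)
  have hK := (integrable_one_add_sq_rpow_neg (by linarith : 1/2 < p + 1)).const_mul (2 * p)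
  have hdecay := tendsto_mul_one_add_sq_rpow_neg_cocompact hp
  have hFTC := integral_of_hasDerivAt_of_tendsto hderiv (hI.add hK)
    (hdecay.mono_left atBot_le_cocompact) (hdecay.mono_left atTop_le_cocompact)
  rw [integral_add hI hK, integral_const_mul, integral_const_mul] at hFTC
  field_simp
  linear_combination hFTC

theorem integral_one_add_sq_rpow_neg_mul_sq {β ε : ℝ} (h : 3/2 < β - 2 * ε) :
    ∫ x : ℝ, (1 + x ^ 2) ^ (-β) * (x * (1 + x ^ 2) ^ ε) ^ 2
      = (∫ x : ℝ, (1 + x ^ 2) ^ (-(β - 2 * ε - 1))) - ∫ x : ℝ, (1 + x ^ 2) ^ (-(β - 2 * ε)) := by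
  have hpt : ∀ x : ℝ, (1 + x ^ 2) ^ (-β) * (x * (1 + x ^ 2) ^ ε) ^ 2
      = (1 + x ^ 2) ^ (-(β - 2 * ε - 1)) - (1 + x ^ 2) ^ (-(β - 2 * ε)) := by
    intro x
    have hy : 0 < 1 + x ^ 2 := by positivity
    have hpow : (1 + x ^ 2) ^ (-β) * ((1 + x ^ 2) ^ ε) ^ 2
        = (1 + x ^ 2) ^ (-(β - 2 * ε)) := by
      rw [← rpow_mul_natCast hy.le, ← rpow_add hy]; push_cast; ring_nf
    have hshift : (1 + x ^ 2) ^ (-(β - 2 * ε - 1))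
        = (1 + x ^ 2) ^ (-(β - 2 * ε)) * (1 + x ^ 2) := by
      rw [← rpow_add_one hy.ne']; ring_nf
    linear_combination x ^ 2 * hpow - hshift
  rw [integral_congr_ae (ae_of_all _ hpt),
    integral_sub (integrable_one_add_sq_rpow_neg (by linarith))
      (integrable_one_add_sq_rpow_neg (by linarith))]

theorem integral_one_add_sq_rpow_neg_mul_energy {β ε : ℝ} (h : 3/2 < β - 2 * ε) :
    ∫ x : ℝ, (1 + x ^ 2) ^ (-β) *
        ((1 + x ^ 2) * ((1 + x ^ 2) ^ (ε - 1) * (1 + (1 + 2 * ε) * x ^ 2)) ^ 2)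
      = (1 + 2 * ε) ^ 2 * (∫ x : ℝ, (1 + x ^ 2) ^ (-(β - 2 * ε - 1)))
        - 4 * ε * (1 + 2 * ε) * (∫ x : ℝ, (1 + x ^ 2) ^ (-(β - 2 * ε)))
        + 4 * ε ^ 2 * ∫ x : ℝ, (1 + x ^ 2) ^ (-(β - 2 * ε + 1)) := by
  have hpt : ∀ x : ℝ, (1 + x ^ 2) ^ (-β) *
        ((1 + x ^ 2) * ((1 + x ^ 2) ^ (ε - 1) * (1 + (1 + 2 * ε) * x ^ 2)) ^ 2)
      = (1 + 2 * ε) ^ 2 * (1 + x ^ 2) ^ (-(β - 2 * ε - 1))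
        - 4 * ε * (1 + 2 * ε) * (1 + x ^ 2) ^ (-(β - 2 * ε))
        + 4 * ε ^ 2 * (1 + x ^ 2) ^ (-(β - 2 * ε + 1)) := by
    intro x
    have hy : 0 < 1 + x ^ 2 := by positivity
    have hpow : (1 + x ^ 2) ^ (-β) * ((1 + x ^ 2) ^ (ε - 1)) ^ 2 * (1 + x ^ 2)
        = (1 + x ^ 2) ^ (-(β - 2 * ε + 1)) := by
      rw [← rpow_mul_natCast hy.le, ← rpow_add hy, ← rpow_add_one hy.ne']; push_cast; ring_nf
    have hshift₁ : (1 + x ^ 2) ^ (-(β - 2 * ε))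
        = (1 + x ^ 2) ^ (-(β - 2 * ε + 1)) * (1 + x ^ 2) := by
      rw [← rpow_add_one hy.ne']; ring_nf
    have hshift₂ : (1 + x ^ 2) ^ (-(β - 2 * ε - 1))
        = (1 + x ^ 2) ^ (-(β - 2 * ε + 1)) * (1 + x ^ 2) ^ 2 := by
      rw [← rpow_add_natCast hy.ne']; push_cast; ring_nf
    linear_combination (1 + (1 + 2 * ε) * x ^ 2) ^ 2 * hpow - (1 + 2 * ε) ^ 2 * hshift₂
      + 4 * ε * (1 + 2 * ε) * hshift₁
  have hJ := integrable_one_add_sq_rpow_neg (p := β - 2 * ε - 1) (by linarith)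
  have hI := integrable_one_add_sq_rpow_neg (p := β - 2 * ε) (by linarith)
  have hK := integrable_one_add_sq_rpow_neg (p := β - 2 * ε + 1) (by linarith)
  rw [integral_congr_ae (ae_of_all _ hpt),
    integral_add (by exact (hJ.const_mul _).sub (hI.const_mul _)) (hK.const_mul _),
    integral_sub (hJ.const_mul _) (hI.const_mul _),
    integral_const_mul, integral_const_mul, integral_const_mul]

/-- For the generalized Cauchy distribution of parameter `β > 1/2` and test function
`f(x) = x(1+x²)^ε` with `ε < (2β-3)/4`, the Rayleigh quotient of the weighted energy and
the variance equals `2(β-1) + 6ε²/(β-2ε)`. -/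
theorem cauchy_rayleigh_quotient (β ε : ℝ) (hβ : 1/2 < β) (hε : ε < (2*β - 3)/4)
    (Z : ℝ) (hZ : Z = ∫ x : ℝ, (1 + x ^ 2) ^ (-β))
    (μ : Measure ℝ)
    (hμ : μ = MeasureTheory.volume.withDensity fun x =>
      ENNReal.ofReal (Z⁻¹ * (1 + x ^ 2) ^ (-β)))
    (f : ℝ → ℝ) (hf : f = fun x => x * (1 + x ^ 2) ^ ε) :
    (∫ x, (1 + x ^ 2) * (deriv f x) ^ 2 ∂μ) /
      (∫ x, f x ^ 2 ∂μ - (∫ x, f x ∂μ) ^ 2)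
    = 2 * (β - 1) + 6 * ε ^ 2 / (β - 2 * ε) := by
  subst hμ hf
  have ha : 3/2 < β - 2 * ε := by linarith
  have hZ₀ : 0 < Z := hZ ▸ integral_one_add_sq_rpow_neg_pos hβ
  have hρ : Measurable fun x : ℝ => Z⁻¹ * (1 + x ^ 2) ^ (-β) := by fun_prop
  have hmean : ∫ x : ℝ, (1 + x ^ 2) ^ (-β) * (x * (1 + x ^ 2) ^ ε) = 0 :=
    integral_eq_zero_of_odd fun x => by ring_nf
  have hrec₁ := integral_one_add_sq_rpow_neg_add_one (p := β - 2 * ε - 1) (by linarith)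
  rw [sub_add_cancel] at hrec₁
  have hrec₂ := integral_one_add_sq_rpow_neg_add_one (p := β - 2 * ε) (by linarith)
  have hJ := integral_one_add_sq_rpow_neg_pos (p := β - 2 * ε - 1) (by linarith)
  simp only [integral_withDensity_ofReal_eq_integral_mul hρ (fun x => by positivity),
    (hasDerivAt_mul_one_add_sq_rpow ε _).deriv, mul_assoc Z⁻¹, integral_const_mul]
  rw [hmean, integral_one_add_sq_rpow_neg_mul_sq ha, integral_one_add_sq_rpow_neg_mul_energy ha,
    hrec₂, hrec₁]
  generalize (∫ x : ℝ, (1 + x ^ 2) ^ (-(β - 2 * ε - 1))) = J at hJ ⊢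
  have h₁ : β - 2 * ε - 1 ≠ 0 := by linarith
  have h₂ : β - 2 * ε ≠ 0 := by linarith
  field_simp
  ring
end

section
/- Let β > 1/2, b ∈ (0,1), μ the generalized Cauchy distribution with density Z^{-1}(1+x²)^{-β}, and σ²(x) = (1+x²)^b. Then the optimal constant in the weighted Poincaré inequality λ Var_μ(f) ≤ ∫ σ² f'² dμ is zero: with f_ε(x) = (1+x²)^ε for 0 < ε < β/2 − 1/4, the ratio Var_μ(f_ε) / ∫ σ² f_ε'² dμ tends to infinity as ε ↑ β/2 − 1/4. -/
open Real MeasureTheory Filter Topology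
open scoped ENNReal NNReal

lemma cwpd_integrable {p : ℝ} (hp : p < -(1/2)) :
    Integrable (fun x : ℝ => (1 + x ^ 2) ^ p) := by
  have h : ((Module.finrank ℝ ℝ : ℝ)) < -(2*p) := by simp; linarith
  have := integrable_rpow_neg_one_add_norm_sq (E := ℝ) (μ := volume) h
  have he : ∀ x : ℝ, ((1:ℝ) + ‖x‖ ^ 2) ^ (-(-(2*p))/2) = (1 + x ^ 2) ^ p := by
    intro x; rw [Real.norm_eq_abs, sq_abs]; norm_num
  simpa [he] using this

lemma cwpd_cont {p : ℝ} : Continuous (fun x : ℝ => (1 + x ^ 2) ^ p) := by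
  refine (continuous_const.add (continuous_pow 2)).rpow_const (fun x => Or.inl (by positivity : (0:ℝ) < 1 + x ^ 2).ne')

lemma cwpd_mono {p q : ℝ} (h : p ≤ q) (x : ℝ) : (1 + x ^ 2) ^ p ≤ (1 + x ^ 2) ^ q :=
  Real.rpow_le_rpow_of_exponent_le (by nlinarith [sq_nonneg x]) h

lemma cwpd_deriv (ε : ℝ) (x : ℝ) :
    deriv (fun y : ℝ => (1 + y ^ 2) ^ ε) x = ε * (1 + x ^ 2) ^ (ε - 1) * (2 * x) := by
  have h1 : HasDerivAt (fun y : ℝ => 1 + y ^ 2) (2 * x) x := by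
    simpa using (hasDerivAt_pow 2 x).const_add 1
  have h2 := (Real.hasDerivAt_rpow_const (x := 1 + x ^ 2) (p := ε)
    (Or.inl (by positivity))).comp x h1
  simpa [mul_assoc, Function.comp_def] using h2.deriv

lemma cwpd_wd {w : ℝ → ℝ} (hw : Continuous w) (hw0 : ∀ x, 0 ≤ w x) (g : ℝ → ℝ) :
    ∫ x, g x ∂(volume.withDensity fun x => ENNReal.ofReal (w x))
      = ∫ x, w x * g x := by
  have : (fun x => ENNReal.ofReal (w x)) = fun x => ((fun x => (w x).toNNReal) x : ℝ≥0∞) := rfl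
  rw [this, integral_withDensity_eq_integral_smul (hw.measurable.real_toNNReal)]
  congr 1; funext x
  simp [NNReal.smul_def, Real.coe_toNNReal _ (hw0 x)]

lemma cwpd_id1 (β ε Zi : ℝ) (x : ℝ) :
    (Zi * (1 + x ^ 2) ^ (-β)) * (1 + x ^ 2) ^ ε = Zi * (1 + x ^ 2) ^ (ε - β) := by
  have hx : (0:ℝ) < 1 + x ^ 2 := by positivity
  rw [mul_assoc, ← Real.rpow_add hx]; ring_nf

lemma cwpd_id2 (β ε Zi : ℝ) (x : ℝ) :
    (Zi * (1 + x ^ 2) ^ (-β)) * ((1 + x ^ 2) ^ ε) ^ 2 = Zi * (1 + x ^ 2) ^ (2*ε - β) := by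
  have hx : (0:ℝ) < 1 + x ^ 2 := by positivity
  calc (Zi * (1 + x ^ 2) ^ (-β)) * ((1 + x ^ 2) ^ ε) ^ 2
      = Zi * ((1+x^2) ^ (-β) * ((1+x^2) ^ ε * (1+x^2) ^ ε)) := by ring
    _ = Zi * (1 + x ^ 2) ^ (2*ε - β) := by
        rw [← Real.rpow_add hx, ← Real.rpow_add hx]; ring_nf

lemma cwpd_id3 (β ε Zi b : ℝ) (x : ℝ) :
    (Zi * (1 + x ^ 2) ^ (-β)) * ((1 + x ^ 2) ^ b * (ε * (1 + x ^ 2) ^ (ε-1) * (2*x)) ^ 2)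
      = (Zi * (4 * ε ^ 2)) * (x ^ 2 * (1 + x ^ 2) ^ (b + 2*(ε-1) - β)) := by
  have hx : (0:ℝ) < 1 + x ^ 2 := by positivity
  calc (Zi * (1 + x ^ 2) ^ (-β)) * ((1 + x ^ 2) ^ b * (ε * (1 + x ^ 2) ^ (ε-1) * (2*x)) ^ 2)
      = (Zi * (4 * ε ^ 2)) * (x ^ 2 * ((1+x^2) ^ (-β) * ((1+x^2) ^ b
          * ((1+x^2) ^ (ε-1) * (1+x^2) ^ (ε-1))))) := by ring
    _ = (Zi * (4 * ε ^ 2)) * (x ^ 2 * (1 + x ^ 2) ^ (b + 2*(ε-1) - β)) := by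
        rw [← Real.rpow_add hx, ← Real.rpow_add hx, ← Real.rpow_add hx]; ring_nf

lemma cwpd_sq_bound (p : ℝ) (x : ℝ) : x ^ 2 * (1 + x ^ 2) ^ p ≤ (1 + x ^ 2) ^ (p + 1) := by
  have hx : (0:ℝ) < 1 + x ^ 2 := by positivity
  have h' : (1 + x ^ 2) ^ (p + 1) = (1 + x ^ 2) ^ p * (1 + x ^ 2) := by
    rw [Real.rpow_add hx, Real.rpow_one]
  rw [h', mul_comm (x ^ 2)]
  exact mul_le_mul_of_nonneg_left (by nlinarith [sq_nonneg x]) (Real.rpow_nonneg hx.le _)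

lemma cwpd_diverge (β : ℝ) (hβ : 1/2 < β) (T : ℝ) :
    ∀ᶠ ε in nhdsWithin (β/2 - 1/4) (Set.Iio (β/2 - 1/4)),
      T < ∫ x : ℝ, (1 + x ^ 2) ^ (2*ε - β) := by
  set l := β/2 - 1/4 with hldef
  set R := Real.exp (2 * Real.sqrt 2 * (|T| + 1)) with hRdef
  have h2 : (0:ℝ) < Real.sqrt 2 := Real.sqrt_pos.2 (by norm_num)
  have hR1 : (1:ℝ) ≤ R := Real.one_le_exp (by positivity)
  have hR0 : (0:ℝ) < R := lt_of_lt_of_le one_pos hR1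
  have hlog : Real.log R = 2 * Real.sqrt 2 * (|T| + 1) := Real.log_exp _
  have hB : (0:ℝ) < 1 + R ^ 2 := by positivity
  have hcont : Tendsto (fun ε : ℝ => (1 + R ^ 2) ^ (2*ε - β + 1/2)) (𝓝 l) (𝓝 1) := by
    have hc : Continuous fun ε : ℝ => (1 + R ^ 2) ^ (2*ε - β + 1/2) := by
      simp only [Real.rpow_def_of_pos hB]
      fun_prop
    have := hc.tendsto l
    have hval : (1 + R ^ 2) ^ (2*l - β + 1/2) = 1 := by
      rw [show 2*l - β + 1/2 = 0 by rw [hldef]; ring, Real.rpow_zero]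
    rwa [hval] at this
  have hev : ∀ᶠ ε in 𝓝 l, 1/2 < (1 + R ^ 2) ^ (2*ε - β + 1/2) :=
    hcont.eventually (eventually_gt_nhds (by norm_num))
  filter_upwards [hev.filter_mono nhdsWithin_le_nhds, self_mem_nhdsWithin] with ε h1 h2'
  have hεl : ε < l := h2'
  have hexp : 2*ε - β < -(1/2) := by rw [hldef] at hεl; linarith
  have hexp' : 2*ε - β + 1/2 ≤ 0 := by linarith
  have hint : Integrable (fun x : ℝ => (1 + x ^ 2) ^ (2*ε - β)) := cwpd_integrable hexp
  set c : ℝ := (1 + R ^ 2) ^ (2*ε - β + 1/2) * (Real.sqrt 2)⁻¹ with hcdef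
  have hc0 : 0 ≤ c := by positivity
  have step2 : ∀ x ∈ Set.Icc (1:ℝ) R, c * x⁻¹ ≤ (1 + x ^ 2) ^ (2*ε - β) := by
    intro x hx
    obtain ⟨hx1, hxR⟩ := hx
    have hx0 : (0:ℝ) < x := lt_of_lt_of_le one_pos hx1
    have hb1 : (0:ℝ) < 1 + x ^ 2 := by positivity
    have e1 : (1 + x ^ 2) ^ (2*ε - β)
        = (1 + x ^ 2) ^ (2*ε - β + 1/2) * (1 + x ^ 2) ^ (-(1/2) : ℝ) := by
      rw [← Real.rpow_add hb1]; norm_num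
    rw [e1]
    have f1 : (1 + R ^ 2) ^ (2*ε - β + 1/2) ≤ (1 + x ^ 2) ^ (2*ε - β + 1/2) :=
      Real.rpow_le_rpow_of_nonpos hb1 (by nlinarith) hexp'
    have f2 : (Real.sqrt 2)⁻¹ * x⁻¹ ≤ (1 + x ^ 2) ^ (-(1/2) : ℝ) := by
      have g1 : (1 + x ^ 2) ^ (-(1/2) : ℝ) = (Real.sqrt (1 + x ^ 2))⁻¹ := by
        rw [Real.rpow_neg hb1.le, Real.sqrt_eq_rpow]
      rw [g1]
      have g2 : Real.sqrt (1 + x ^ 2) ≤ Real.sqrt 2 * x := by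
        rw [show Real.sqrt 2 * x = Real.sqrt 2 * Real.sqrt (x^2) by rw [Real.sqrt_sq hx0.le],
          ← Real.sqrt_mul (by norm_num)]
        exact Real.sqrt_le_sqrt (by nlinarith)
      rw [← mul_inv]
      exact inv_anti₀ (Real.sqrt_pos.2 hb1) g2
    calc c * x⁻¹ = (1 + R ^ 2) ^ (2*ε - β + 1/2) * ((Real.sqrt 2)⁻¹ * x⁻¹) := by
          rw [hcdef]; ring
      _ ≤ (1 + x ^ 2) ^ (2*ε - β + 1/2) * (1 + x ^ 2) ^ (-(1/2) : ℝ) := by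
          apply mul_le_mul f1 f2 (by positivity) (by positivity)
  have int1 : IntegrableOn (fun x : ℝ => c * x⁻¹) (Set.Icc 1 R) := by
    apply ContinuousOn.integrableOn_compact isCompact_Icc
    apply ContinuousOn.mul continuousOn_const
    exact ContinuousOn.inv₀ continuousOn_id fun x hx => ne_of_gt (lt_of_lt_of_le one_pos hx.1)
  have step3 : ∫ x in Set.Icc (1:ℝ) R, c * x⁻¹ ≤ ∫ x in Set.Icc (1:ℝ) R, (1 + x ^ 2) ^ (2*ε - β) :=
    setIntegral_mono_on int1 (hint.integrableOn) measurableSet_Icc step2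
  have step1 : ∫ x in Set.Icc (1:ℝ) R, (1 + x ^ 2) ^ (2*ε - β) ≤ ∫ x : ℝ, (1 + x ^ 2) ^ (2*ε - β) :=
    setIntegral_le_integral hint
      (Filter.Eventually.of_forall fun x => Real.rpow_nonneg (by positivity) _)
  have calc_inv : ∫ x in Set.Icc (1:ℝ) R, x⁻¹ = Real.log R := by
    rw [integral_Icc_eq_integral_Ioc, ← intervalIntegral.integral_of_le hR1,
      integral_inv (by rw [Set.uIcc_of_le hR1]; rintro ⟨h0, -⟩; linarith)]
    rw [div_one]
  have step4 : T < ∫ x in Set.Icc (1:ℝ) R, c * x⁻¹ := by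
    rw [MeasureTheory.integral_const_mul, calc_inv, hlog]
    have hcge : c ≥ 1/2 * (Real.sqrt 2)⁻¹ := by
      rw [hcdef]
      apply mul_le_mul_of_nonneg_right h1.le (by positivity)
    have key : c * (2 * Real.sqrt 2 * (|T| + 1))
        ≥ (1/2 * (Real.sqrt 2)⁻¹) * (2 * Real.sqrt 2 * (|T| + 1)) :=
      mul_le_mul_of_nonneg_right hcge (by positivity)
    have id1 : (1/2 * (Real.sqrt 2)⁻¹) * (2 * Real.sqrt 2 * (|T| + 1)) = |T| + 1 := by
      field_simp
    have hT : T < |T| + 1 := lt_of_le_of_lt (le_abs_self T) (by linarith)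
    linarith [id1 ▸ key]
  linarith

/-- For the generalized Cauchy distribution of parameter `β > 1/2` with weight
`σ²(x) = (1+x²)^b`, `b ∈ (0,1)`, the optimal weighted Poincaré constant is zero: with
`f_ε(x) = (1+x²)^ε`, `0 < ε < β/2 - 1/4`, the ratio of variance to energy tends to
infinity as `ε ↑ β/2 - 1/4`, and no positive constant can work. -/
theorem cauchy_weighted_poincare_degenerate (β b : ℝ) (hβ : 1/2 < β) (hb : b ∈ Set.Ioo (0:ℝ) 1)
    (Z : ℝ) (hZ : Z = ∫ x : ℝ, (1 + x ^ 2) ^ (-β))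
    (μ : Measure ℝ)
    (hμ : μ = MeasureTheory.volume.withDensity fun x =>
      ENNReal.ofReal (Z⁻¹ * (1 + x ^ 2) ^ (-β))) :
    Tendsto (fun ε : ℝ =>
        (∫ x, ((1 + x ^ 2) ^ ε) ^ 2 ∂μ - (∫ x, (1 + x ^ 2) ^ ε ∂μ) ^ 2) /
        (∫ x, (1 + x ^ 2) ^ b * (deriv (fun y => (1 + y ^ 2) ^ ε) x) ^ 2 ∂μ))
      (nhdsWithin (β/2 - 1/4) (Set.Iio (β/2 - 1/4))) atTop ∧
    (∀ l : ℝ, 0 < l →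
      ¬ (∀ f : ℝ → ℝ, ContDiff ℝ (⊤ : ℕ∞) f → MemLp f 2 μ →
        l * (∫ x, f x ^ 2 ∂μ - (∫ x, f x ∂μ) ^ 2)
          ≤ ∫ x, (1 + x ^ 2) ^ b * (deriv f x) ^ 2 ∂μ)) := by
  obtain ⟨hb0, hb1⟩ := hb
  have hZpos : 0 < Z := by
    rw [hZ]
    have hint : Integrable (fun x : ℝ => (1 + x ^ 2) ^ (-β)) := cwpd_integrable (by linarith)
    refine (integral_pos_iff_support_of_nonneg
      (fun x => Real.rpow_nonneg (by positivity) _) hint).2 ?_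
    have hsub : Set.Ioi (0:ℝ) ⊆ Function.support (fun x : ℝ => (1 + x ^ 2) ^ (-β)) :=
      fun x _ => ne_of_gt (Real.rpow_pos_of_pos (by positivity) _)
    refine lt_of_lt_of_le ?_ (measure_mono hsub)
    rw [Real.volume_Ioi]; exact ENNReal.zero_lt_top
  have hZi : 0 < Z⁻¹ := inv_pos.2 hZpos
  subst hμ
  have hwc : Continuous (fun x : ℝ => Z⁻¹ * (1 + x ^ 2) ^ (-β)) := continuous_const.mul cwpd_cont
  have hw0 : ∀ x : ℝ, 0 ≤ Z⁻¹ * (1 + x ^ 2) ^ (-β) :=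
    fun x => mul_nonneg hZi.le (Real.rpow_nonneg (by positivity) _)
  have key := cwpd_wd hwc hw0
  simp only [key]
  -- names for limit point
  have hl0 : (0:ℝ) < β/2 - 1/4 := by linarith
  -- pointwise rewriting of the three integrals
  have hPEq : ∀ ε : ℝ, (∫ x : ℝ, (Z⁻¹ * (1 + x ^ 2) ^ (-β)) * ((1 + x ^ 2) ^ ε) ^ 2)
      = Z⁻¹ * ∫ x : ℝ, (1 + x ^ 2) ^ (2*ε - β) := by
    intro ε
    rw [show (fun x : ℝ => (Z⁻¹ * (1 + x ^ 2) ^ (-β)) * ((1 + x ^ 2) ^ ε) ^ 2)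
      = fun x : ℝ => Z⁻¹ * (1 + x ^ 2) ^ (2*ε - β) from funext fun x => cwpd_id2 β ε Z⁻¹ x]
    exact MeasureTheory.integral_const_mul _ _
  have hQEq : ∀ ε : ℝ, (∫ x : ℝ, (Z⁻¹ * (1 + x ^ 2) ^ (-β)) * (1 + x ^ 2) ^ ε)
      = Z⁻¹ * ∫ x : ℝ, (1 + x ^ 2) ^ (ε - β) := by
    intro ε
    rw [show (fun x : ℝ => (Z⁻¹ * (1 + x ^ 2) ^ (-β)) * (1 + x ^ 2) ^ ε)
      = fun x : ℝ => Z⁻¹ * (1 + x ^ 2) ^ (ε - β) from funext fun x => cwpd_id1 β ε Z⁻¹ x]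
    exact MeasureTheory.integral_const_mul _ _
  have hEEq : ∀ ε : ℝ, (∫ x : ℝ, (Z⁻¹ * (1 + x ^ 2) ^ (-β))
        * ((1 + x ^ 2) ^ b * (deriv (fun y => (1 + y ^ 2) ^ ε) x) ^ 2))
      = ∫ x : ℝ, (Z⁻¹ * (4 * ε ^ 2)) * (x ^ 2 * (1 + x ^ 2) ^ (b + 2*(ε-1) - β)) := by
    intro ε
    congr 1; funext x
    rw [cwpd_deriv ε x]
    exact cwpd_id3 β ε Z⁻¹ b x
  -- integrability and bounds for ε ∈ Ioo 0 l
  set M : ℝ := Z⁻¹ * ∫ x : ℝ, (1 + x ^ 2) ^ ((β/2 - 1/4) - β) with hMdef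
  set C : ℝ := Z⁻¹ * β ^ 2 * ∫ x : ℝ, (1 + x ^ 2) ^ (b - 3/2) with hCdef
  have hM0 : 0 ≤ M :=
    mul_nonneg hZi.le (integral_nonneg fun x => Real.rpow_nonneg (by positivity) _)
  have hC0 : 0 ≤ C :=
    mul_nonneg (by positivity) (integral_nonneg fun x => Real.rpow_nonneg (by positivity) _)
  have hQbdd : ∀ ε ∈ Set.Ioo (0:ℝ) (β/2 - 1/4),
      Z⁻¹ * (∫ x : ℝ, (1 + x ^ 2) ^ (ε - β)) ≤ M ∧
      0 ≤ Z⁻¹ * ∫ x : ℝ, (1 + x ^ 2) ^ (ε - β) := by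
    intro ε hε
    obtain ⟨hε0, hεl⟩ := hε
    constructor
    · rw [hMdef]
      apply mul_le_mul_of_nonneg_left _ hZi.le
      apply integral_mono (cwpd_integrable (by linarith)) (cwpd_integrable (by linarith))
      exact fun x => cwpd_mono (by linarith) x
    · exact mul_nonneg hZi.le (integral_nonneg fun x => Real.rpow_nonneg (by positivity) _)
  have hEint : ∀ ε ∈ Set.Ioo (0:ℝ) (β/2 - 1/4),
      Integrable (fun x : ℝ => (Z⁻¹ * (4 * ε ^ 2)) * (x ^ 2 * (1 + x ^ 2) ^ (b + 2*(ε-1) - β))) := by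
    intro ε hε
    obtain ⟨hε0, hεl⟩ := hε
    have hbase : Integrable (fun x : ℝ => x ^ 2 * (1 + x ^ 2) ^ (b + 2*(ε-1) - β)) := by
      apply Integrable.mono' (cwpd_integrable (p := b + 2*(ε-1) - β + 1) (by linarith))
      · exact ((continuous_pow 2).mul cwpd_cont).aestronglyMeasurable
      · refine Filter.Eventually.of_forall fun x => ?_
        rw [Real.norm_eq_abs, abs_of_nonneg (by positivity)]
        exact cwpd_sq_bound _ x
    exact hbase.const_mul _
  have hEle : ∀ ε ∈ Set.Ioo (0:ℝ) (β/2 - 1/4),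
      (∫ x : ℝ, (Z⁻¹ * (4 * ε ^ 2)) * (x ^ 2 * (1 + x ^ 2) ^ (b + 2*(ε-1) - β))) ≤ C := by
    intro ε hε
    obtain ⟨hε0, hεl⟩ := hε
    have hb2 : Integrable (fun x : ℝ => (Z⁻¹ * β ^ 2) * (1 + x ^ 2) ^ (b - 3/2)) :=
      (cwpd_integrable (by linarith)).const_mul _
    have hle : ∀ x : ℝ, (Z⁻¹ * (4 * ε ^ 2)) * (x ^ 2 * (1 + x ^ 2) ^ (b + 2*(ε-1) - β))
        ≤ (Z⁻¹ * β ^ 2) * (1 + x ^ 2) ^ (b - 3/2) := by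
      intro x
      have h1 : x ^ 2 * (1 + x ^ 2) ^ (b + 2*(ε-1) - β) ≤ (1 + x ^ 2) ^ (b - 3/2) :=
        le_trans (cwpd_sq_bound _ x) (cwpd_mono (by linarith) x)
      have h2 : Z⁻¹ * (4 * ε ^ 2) ≤ Z⁻¹ * β ^ 2 := by
        apply mul_le_mul_of_nonneg_left _ hZi.le
        nlinarith
      exact mul_le_mul h2 h1 (by positivity) (by positivity)
    calc (∫ x : ℝ, (Z⁻¹ * (4 * ε ^ 2)) * (x ^ 2 * (1 + x ^ 2) ^ (b + 2*(ε-1) - β)))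
        ≤ ∫ x : ℝ, (Z⁻¹ * β ^ 2) * (1 + x ^ 2) ^ (b - 3/2) :=
          integral_mono (hEint ε ⟨hε0, hεl⟩) hb2 hle
      _ = C := by rw [hCdef, MeasureTheory.integral_const_mul]
  have hEpos : ∀ ε ∈ Set.Ioo (0:ℝ) (β/2 - 1/4),
      0 < ∫ x : ℝ, (Z⁻¹ * (4 * ε ^ 2)) * (x ^ 2 * (1 + x ^ 2) ^ (b + 2*(ε-1) - β)) := by
    intro ε hε
    obtain ⟨hε0, hεl⟩ := hε
    refine (integral_pos_iff_support_of_nonneg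
      (fun x => by positivity) (hEint ε ⟨hε0, hεl⟩)).2 ?_
    have hsub : Set.Ioi (0:ℝ) ⊆ Function.support
        (fun x : ℝ => (Z⁻¹ * (4 * ε ^ 2)) * (x ^ 2 * (1 + x ^ 2) ^ (b + 2*(ε-1) - β))) := by
      intro x hx
      have hx0 : (0:ℝ) < x := hx
      have : 0 < (Z⁻¹ * (4 * ε ^ 2)) * (x ^ 2 * (1 + x ^ 2) ^ (b + 2*(ε-1) - β)) := by
        apply mul_pos (by positivity)
        exact mul_pos (by positivity) (Real.rpow_pos_of_pos (by positivity) _)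
      exact ne_of_gt this
    refine lt_of_lt_of_le ?_ (measure_mono hsub)
    rw [Real.volume_Ioi]; exact ENNReal.zero_lt_top
  -- Part 1
  have part1 : Tendsto (fun ε : ℝ =>
      ((∫ x : ℝ, (Z⁻¹ * (1 + x ^ 2) ^ (-β)) * ((1 + x ^ 2) ^ ε) ^ 2)
        - (∫ x : ℝ, (Z⁻¹ * (1 + x ^ 2) ^ (-β)) * (1 + x ^ 2) ^ ε) ^ 2) /
      (∫ x : ℝ, (Z⁻¹ * (1 + x ^ 2) ^ (-β))
        * ((1 + x ^ 2) ^ b * (deriv (fun y => (1 + y ^ 2) ^ ε) x) ^ 2)))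
      (nhdsWithin (β/2 - 1/4) (Set.Iio (β/2 - 1/4))) atTop := by
    rw [tendsto_atTop]
    intro K
    set K' : ℝ := max K 1 with hK'def
    have hK'pos : (0:ℝ) < K' := lt_of_lt_of_le one_pos (le_max_right _ _)
    have hdiv := cwpd_diverge β hβ (Z * (M ^ 2 + K' * C))
    have hpos : ∀ᶠ ε in nhdsWithin (β/2 - 1/4) (Set.Iio (β/2 - 1/4)), 0 < ε :=
      (eventually_gt_nhds hl0).filter_mono nhdsWithin_le_nhds
    filter_upwards [hdiv, hpos, self_mem_nhdsWithin] with ε hdivε hε0 hεl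
    have hεIoo : ε ∈ Set.Ioo (0:ℝ) (β/2 - 1/4) := ⟨hε0, hεl⟩
    rw [hPEq ε, hQEq ε, hEEq ε]
    have hP : M ^ 2 + K' * C < Z⁻¹ * ∫ x : ℝ, (1 + x ^ 2) ^ (2*ε - β) := by
      have h' : Z⁻¹ * (Z * (M ^ 2 + K' * C)) < Z⁻¹ * ∫ x : ℝ, (1 + x ^ 2) ^ (2*ε - β) :=
        mul_lt_mul_of_pos_left hdivε hZi
      rwa [show Z⁻¹ * (Z * (M ^ 2 + K' * C)) = M ^ 2 + K' * C by field_simp] at h'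
    obtain ⟨hQM, hQ0⟩ := hQbdd ε hεIoo
    have hQsq : (Z⁻¹ * ∫ x : ℝ, (1 + x ^ 2) ^ (ε - β)) ^ 2 ≤ M ^ 2 := by
      apply pow_le_pow_left₀ hQ0 hQM
    have hE1 := hEle ε hεIoo
    have hE2 := hEpos ε hεIoo
    have hnum : K' * (∫ x : ℝ, (Z⁻¹ * (4 * ε ^ 2)) * (x ^ 2 * (1 + x ^ 2) ^ (b + 2*(ε-1) - β)))
        ≤ (Z⁻¹ * ∫ x : ℝ, (1 + x ^ 2) ^ (2*ε - β))
          - (Z⁻¹ * ∫ x : ℝ, (1 + x ^ 2) ^ (ε - β)) ^ 2 := by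
      have : K' * (∫ x : ℝ, (Z⁻¹ * (4 * ε ^ 2)) * (x ^ 2 * (1 + x ^ 2) ^ (b + 2*(ε-1) - β)))
          ≤ K' * C := mul_le_mul_of_nonneg_left hE1 hK'pos.le
      linarith
    have : K' ≤ ((Z⁻¹ * ∫ x : ℝ, (1 + x ^ 2) ^ (2*ε - β))
          - (Z⁻¹ * ∫ x : ℝ, (1 + x ^ 2) ^ (ε - β)) ^ 2)
        / (∫ x : ℝ, (Z⁻¹ * (4 * ε ^ 2)) * (x ^ 2 * (1 + x ^ 2) ^ (b + 2*(ε-1) - β))) :=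
      (le_div_iff₀ hE2).2 hnum
    exact le_trans (le_max_left K 1) this
  refine ⟨part1, ?_⟩
  -- Part 2
  intro l hl hcontra
  have hround := (tendsto_atTop.1 part1) (1/l + 1)
  have hpos : ∀ᶠ ε in nhdsWithin (β/2 - 1/4) (Set.Iio (β/2 - 1/4)), 0 < ε :=
    (eventually_gt_nhds hl0).filter_mono nhdsWithin_le_nhds
  obtain ⟨ε, hrat, hε0, hεl⟩ := (hround.and (hpos.and self_mem_nhdsWithin)).exists
  have hεIoo : ε ∈ Set.Ioo (0:ℝ) (β/2 - 1/4) := ⟨hε0, hεl⟩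
  have hsm : ContDiff ℝ (⊤ : ℕ∞) (fun x : ℝ => (1 + x ^ 2) ^ ε) := by
    exact ContDiff.rpow (contDiff_const.add (contDiff_id.pow 2)) contDiff_const
      (fun x => by positivity)
  have hmem : MemLp (fun x : ℝ => (1 + x ^ 2) ^ ε) 2
      (volume.withDensity fun x => ENNReal.ofReal (Z⁻¹ * (1 + x ^ 2) ^ (-β))) := by
    rw [memLp_two_iff_integrable_sq cwpd_cont.aestronglyMeasurable]
    rw [integrable_withDensity_iff (hwc.measurable.ennreal_ofReal)
      (Filter.Eventually.of_forall fun x => ENNReal.ofReal_lt_top)]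
    have hfe : (fun x : ℝ => ((1 + x ^ 2) ^ ε) ^ 2
          * (ENNReal.ofReal (Z⁻¹ * (1 + x ^ 2) ^ (-β))).toReal)
        = fun x : ℝ => Z⁻¹ * (1 + x ^ 2) ^ (2*ε - β) := by
      funext x
      rw [ENNReal.toReal_ofReal (hw0 x), mul_comm]
      exact cwpd_id2 β ε Z⁻¹ x
    rw [hfe]
    exact (cwpd_integrable (by have := hεIoo.2; linarith)).const_mul _
  have hineq := hcontra _ hsm hmem
  beta_reduce at hineq
  rw [hPEq ε, hQEq ε, hEEq ε] at hineq
  rw [hPEq ε, hQEq ε, hEEq ε] at hrat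
  set Varε : ℝ := (Z⁻¹ * ∫ x : ℝ, (1 + x ^ 2) ^ (2*ε - β))
      - (Z⁻¹ * ∫ x : ℝ, (1 + x ^ 2) ^ (ε - β)) ^ 2 with hVdef
  set Eε : ℝ := ∫ x : ℝ, (Z⁻¹ * (4 * ε ^ 2)) * (x ^ 2 * (1 + x ^ 2) ^ (b + 2*(ε-1) - β)) with hEdef
  have hE2 : 0 < Eε := hEpos ε hεIoo
  have h1 : (1/l + 1) * Eε ≤ Varε := (le_div_iff₀ hE2).1 hrat
  have h2 : l * ((1/l + 1) * Eε) ≤ l * Varε := mul_le_mul_of_nonneg_left h1 hl.le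
  have h3 : l * ((1/l + 1) * Eε) = Eε + l * Eε := by field_simp
  have h4 : 0 < l * Eε := mul_pos hl hE2
  linarith [h3 ▸ h2, hineq]
end

section
/- Let μ be a probability measure on ℝ with smooth positive density proportional to e^{-V}, and let f be a smooth function with f' > 0 everywhere such that the function V_f := (−(f'' − V'f'))'/f' satisfies V_f ≥ c > 0. Then for every smooth compactly supported g, c · Var_μ(g) ≤ ∫ g'² dμ. -/
open Real MeasureTheory
open scoped NNReal ENNReal

open Set Filter in
lemma cs_interval {a b : ℝ} (hab : a ≤ b) (u v : ℝ → ℝ) (hu : Continuous u) (hv : Continuous v) :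
    (∫ t in a..b, u t * v t) ^ 2 ≤ (∫ t in a..b, u t ^ 2) * (∫ t in a..b, v t ^ 2) := by
  set A := ∫ t in a..b, v t ^ 2 with hA
  set B := ∫ t in a..b, u t * v t with hB
  set C := ∫ t in a..b, u t ^ 2 with hC
  have key : ∀ lam : ℝ, 0 ≤ A * (lam * lam) + (-2 * B) * lam + C := by
    intro lam
    have h0 : 0 ≤ ∫ t in a..b, (lam * v t - u t) ^ 2 :=
      intervalIntegral.integral_nonneg hab (fun t _ => sq_nonneg _)
    have hexp : (∫ t in a..b, (lam * v t - u t) ^ 2)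
        = A * (lam * lam) + (-2 * B) * lam + C := by
      have h1 : ∀ t, (lam * v t - u t) ^ 2
          = (lam * lam) * v t ^ 2 + (-2 * lam) * (u t * v t) + u t ^ 2 := by
        intro t; ring
      rw [intervalIntegral.integral_congr (g := fun t =>
        (lam * lam) * v t ^ 2 + (-2 * lam) * (u t * v t) + u t ^ 2) (fun t _ => h1 t)]
      rw [intervalIntegral.integral_add, intervalIntegral.integral_add,
        intervalIntegral.integral_const_mul, intervalIntegral.integral_const_mul]
      · ring
      · exact (continuous_const.mul (hv.pow 2)).intervalIntegrable a b
      · exact (continuous_const.mul (hu.mul hv)).intervalIntegrable a b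
      · exact ((continuous_const.mul (hv.pow 2)).add (continuous_const.mul (hu.mul hv))).intervalIntegrable a b
      · exact (hu.pow 2).intervalIntegrable a b
    linarith [h0, hexp.symm.le]
  have hd := discrim_le_zero key
  rw [discrim] at hd
  nlinarith [hd]

open Set Filter in
lemma core_right (ρ φ ψ f g g' : ℝ → ℝ) (c x₀ R : ℝ)
    (hc : 0 < c)
    (hρc : Continuous ρ) (hρ : ∀ x, 0 < ρ x)
    (hφc : Continuous φ) (hφ : ∀ x, 0 < φ x)
    (hfd : ∀ x, HasDerivAt f (φ x) x)
    (hpd : ∀ x, HasDerivAt (fun y => φ y * ρ y) (-(ψ x * ρ x)) x)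
    (hψc : Continuous ψ)
    (hψf : ∀ x, x₀ ≤ x → c * (f x - f x₀) ≤ ψ x)
    (hgd : ∀ x, HasDerivAt g (g' x) x) (hg'c : Continuous g')
    (hsupp : ∀ x, R ≤ x → g' x = 0) :
    c * ∫ x in Ioi x₀, (g x - g x₀) ^ 2 * ρ x ≤ ∫ x in Ioi x₀, g' x ^ 2 * ρ x := by
  set p := fun x => φ x * ρ x with hpdef
  have hp : ∀ x, 0 < p x := fun x => mul_pos (hφ x) (hρ x)
  have hpc : Continuous p := hφc.mul hρc
  set σ := fun t => g' t ^ 2 / φ t with hσdef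
  have hσc : Continuous σ := (hg'c.pow 2).div hφc (fun x => (hφ x).ne')
  have hσ0 : ∀ t, 0 ≤ σ t := fun t => div_nonneg (sq_nonneg _) (hφ t).le
  have hσp : ∀ t, σ t * p t = g' t ^ 2 * ρ t := by
    intro t
    have : φ t ≠ 0 := (hφ t).ne'
    simp only [hσdef, hpdef]
    field_simp
  set M := max R x₀ with hMdef
  have hx₀M : x₀ ≤ M := le_max_right _ _
  have hσM : ∀ t, M ≤ t → σ t = 0 := by
    intro t ht
    simp [hσdef, hsupp t (le_trans (le_max_left _ _) ht)]
  set H := fun x => ∫ t in x₀..x, σ t with hHdef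
  have hHd : ∀ x, HasDerivAt H (σ x) x := fun x =>
    intervalIntegral.integral_hasDerivAt_right (hσc.intervalIntegrable _ _)
      (hσc.stronglyMeasurableAtFilter _ _) hσc.continuousAt
  have hHc : Continuous H := by
    rw [continuous_iff_continuousAt]; exact fun x => (hHd x).continuousAt
  have hH0 : ∀ x, x₀ ≤ x → 0 ≤ H x := fun x hx =>
    intervalIntegral.integral_nonneg hx (fun t _ => hσ0 t)
  have hHM : ∀ x, H x ≤ H M := by
    intro x
    rcases le_total x M with h | h
    · have : H x + ∫ t in x..M, σ t = H M :=
        intervalIntegral.integral_add_adjacent_intervals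
          (hσc.intervalIntegrable _ _) (hσc.intervalIntegrable _ _)
      nlinarith [intervalIntegral.integral_nonneg (μ := volume) h (fun t _ => hσ0 t)]
    · have : H M + ∫ t in M..x, σ t = H x :=
        intervalIntegral.integral_add_adjacent_intervals
          (hσc.intervalIntegrable _ _) (hσc.intervalIntegrable _ _)
      have hz : ∫ t in M..x, σ t = 0 := by
        rw [intervalIntegral.integral_congr (g := fun _ => (0:ℝ))]
        · simp
        · intro t ht
          rw [uIcc_of_le h] at ht
          exact hσM t ht.1
      linarith
  -- f is monotone
  have hfD : Differentiable ℝ f := fun x => (hfd x).differentiableAt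
  have hfmono : Monotone f := by
    apply monotone_of_deriv_nonneg hfD
    intro x; rw [(hfd x).deriv]; exact (hφ x).le
  have hψ0 : ∀ x, x₀ ≤ x → 0 ≤ ψ x := by
    intro x hx
    have := hψf x hx
    nlinarith [hfmono hx]
  -- Cauchy-Schwarz
  have hCS : ∀ x, x₀ ≤ x → (g x - g x₀) ^ 2 ≤ H x * (f x - f x₀) := by
    intro x hx
    have hsq : ∀ t, 0 < Real.sqrt (φ t) := fun t => Real.sqrt_pos.mpr (hφ t)
    set u := fun t => g' t / Real.sqrt (φ t) with hudef
    set v := fun t => Real.sqrt (φ t) with hvdef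
    have hv : Continuous v := Real.continuous_sqrt.comp hφc
    have hu : Continuous u := hg'c.div hv (fun t => (hsq t).ne')
    have huv : ∀ t, u t * v t = g' t := fun t => div_mul_cancel₀ _ (hsq t).ne'
    have hu2 : ∀ t, u t ^ 2 = σ t := by
      intro t; simp only [hudef, hσdef, div_pow, Real.sq_sqrt (hφ t).le]
    have hv2 : ∀ t, v t ^ 2 = φ t := fun t => Real.sq_sqrt (hφ t).le
    have hgx : g x - g x₀ = ∫ t in x₀..x, g' t :=
      (intervalIntegral.integral_eq_sub_of_hasDerivAt (fun t _ => hgd t)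
        (hg'c.intervalIntegrable _ _)).symm
    have hfx : f x - f x₀ = ∫ t in x₀..x, φ t :=
      (intervalIntegral.integral_eq_sub_of_hasDerivAt (fun t _ => hfd t)
        (hφc.intervalIntegrable _ _)).symm
    calc (g x - g x₀) ^ 2 = (∫ t in x₀..x, u t * v t) ^ 2 := by
          rw [intervalIntegral.integral_congr (g := g') (fun t _ => huv t), ← hgx]
      _ ≤ (∫ t in x₀..x, u t ^ 2) * (∫ t in x₀..x, v t ^ 2) := cs_interval hx u v hu hv
      _ = H x * (f x - f x₀) := by
          rw [intervalIntegral.integral_congr (g := σ) (fun t _ => hu2 t),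
            intervalIntegral.integral_congr (g := φ) (fun t _ => hv2 t), ← hfx]
  -- pointwise bound
  have hpoint : ∀ x, x₀ < x → c * ((g x - g x₀) ^ 2 * ρ x) ≤ H x * (ψ x * ρ x) := by
    intro x hx
    have h1 := hCS x hx.le
    have h2 := hψf x hx.le
    have h3 := hH0 x hx.le
    have h4 := (hρ x).le
    nlinarith [mul_le_mul_of_nonneg_right h1 (mul_pos hc (hρ x)).le,
      mul_le_mul_of_nonneg_right h2 (mul_nonneg h3 h4)]
  -- p is antitone on [x₀, ∞)
  have hpD : Differentiable ℝ p := fun x => (hpd x).differentiableAt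
  have hpanti : AntitoneOn p (Ici x₀) := by
    apply antitoneOn_of_deriv_nonpos (convex_Ici x₀) hpc.continuousOn
      (hpD.differentiableOn)
    intro x hx
    rw [interior_Ici] at hx
    rw [(hpd x).deriv]
    have := hψ0 x hx.le
    nlinarith [(hρ x).le]
  -- limit of p at infinity
  set q := fun x => p (max x₀ x) with hqdef
  have hqanti : Antitone q := by
    intro x y hxy
    exact hpanti (mem_Ici.mpr (le_max_left _ _)) (mem_Ici.mpr (le_max_left _ _))
      (max_le_max le_rfl hxy)
  have hqbdd : BddBelow (Set.range q) := ⟨0, by rintro _ ⟨x, rfl⟩; exact (hp _).le⟩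
  have hqt : Tendsto q atTop (nhds (⨅ x, q x)) := tendsto_atTop_ciInf hqanti hqbdd
  have hℓ : (0:ℝ) ≤ ⨅ x, q x := le_ciInf (fun x => (hp _).le)
  have hpq : q =ᶠ[atTop] p := by
    filter_upwards [eventually_ge_atTop x₀] with x hx
    simp [hqdef, max_eq_right hx]
  have hpt : Tendsto p atTop (nhds (⨅ x, q x)) := hqt.congr' hpq
  -- integrability of ψρ on Ioi x₀
  have hψρint : IntegrableOn (fun x => ψ x * ρ x) (Ioi x₀) volume := by
    apply integrableOn_Ioi_deriv_of_nonneg (g := fun x => -p x) (l := -(⨅ x, q x))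
    · exact (hpc.neg.continuousAt).continuousWithinAt
    · intro x _
      exact (by simpa using (hpd x).neg : HasDerivAt (-p) (ψ x * ρ x) x)
    · intro x hx
      exact mul_nonneg (hψ0 x (le_of_lt hx)) (hρ x).le
    · exact hpt.neg
  -- integrability of H·ψρ on Ioi x₀
  have hHψρint : IntegrableOn (fun x => H x * (ψ x * ρ x)) (Ioi x₀) volume := by
    apply Integrable.mono' (hψρint.const_mul (H M))
    · exact (hHc.mul (hψc.mul hρc)).aestronglyMeasurable
    · filter_upwards [ae_restrict_mem measurableSet_Ioi] with x hx
      have h0 : 0 ≤ ψ x * ρ x := mul_nonneg (hψ0 x (le_of_lt hx)) (hρ x).le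
      rw [Real.norm_eq_abs, abs_mul, abs_of_nonneg h0]
      have habs : |H x| ≤ H M := by
        rw [abs_of_nonneg (hH0 x (le_of_lt hx))]; exact hHM x
      exact mul_le_mul_of_nonneg_right habs h0
  -- integrability of g'^2 ρ on Ioi x₀
  have hKint : IntegrableOn (fun x => g' x ^ 2 * ρ x) (Ioi x₀) volume := by
    rw [← Ioc_union_Ioi_eq_Ioi hx₀M]
    apply IntegrableOn.union
    · exact ((hg'c.pow 2).mul hρc).integrableOn_Ioc
    · rw [integrableOn_congr_fun (g := fun _ => (0:ℝ)) ?_ measurableSet_Ioi]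
      · exact integrableOn_zero
      · intro x hx
        simp [hsupp x (le_trans (le_max_left _ _) (le_of_lt hx))]
  set K := ∫ x in Ioi x₀, g' x ^ 2 * ρ x with hKdef
  have hK0 : 0 ≤ K := setIntegral_nonneg measurableSet_Ioi
    (fun x _ => mul_nonneg (sq_nonneg _) (hρ x).le)
  -- interval integral bound via integration by parts
  have hIBP : ∀ N, x₀ ≤ N → (∫ x in x₀..N, H x * (ψ x * ρ x)) ≤ K := by
    intro N hN
    have hparts := intervalIntegral.integral_mul_deriv_eq_deriv_mul
      (a := x₀) (b := N) (u := H) (u' := σ) (v := fun x => -p x) (v' := fun x => ψ x * ρ x)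
      (fun x _ => hHd x) (fun x _ => (by simpa using (hpd x).neg : HasDerivAt (-p) (ψ x * ρ x) x))
      (hσc.intervalIntegrable _ _) ((hψc.mul hρc).intervalIntegrable _ _)
    have hHx₀ : H x₀ = 0 := intervalIntegral.integral_same
    have hneg : (∫ x in x₀..N, σ x * -p x) = -∫ x in x₀..N, σ x * p x := by
      simp [mul_neg, intervalIntegral.integral_neg]
    rw [hparts, hHx₀]
    beta_reduce
    rw [hneg]
    have hσpN : (∫ x in x₀..N, σ x * p x) = ∫ x in x₀..N, g' x ^ 2 * ρ x :=
      intervalIntegral.integral_congr (fun t _ => hσp t)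
    have hle : (∫ x in x₀..N, g' x ^ 2 * ρ x) ≤ K := by
      rw [intervalIntegral.integral_of_le hN]
      apply setIntegral_mono_set hKint
      · filter_upwards [ae_restrict_mem measurableSet_Ioi] with x _
        exact mul_nonneg (sq_nonneg _) (hρ x).le
      · exact HasSubset.Subset.eventuallyLE Ioc_subset_Ioi_self
    have hHN : 0 ≤ H N * p N := mul_nonneg (hH0 N hN) (hp N).le
    nlinarith [hσpN, hle]
  have hJ : Tendsto (fun N => ∫ x in x₀..N, H x * (ψ x * ρ x)) atTop
      (nhds (∫ x in Ioi x₀, H x * (ψ x * ρ x))) :=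
    intervalIntegral_tendsto_integral_Ioi x₀ hHψρint tendsto_id
  have hJle : (∫ x in Ioi x₀, H x * (ψ x * ρ x)) ≤ K := by
    apply le_of_tendsto hJ
    filter_upwards [eventually_ge_atTop x₀] with N hN
    exact hIBP N hN
  have hfinal : (∫ x in Ioi x₀, c * ((g x - g x₀) ^ 2 * ρ x))
      ≤ ∫ x in Ioi x₀, H x * (ψ x * ρ x) := by
    apply integral_mono_of_nonneg
    · filter_upwards with x
      exact mul_nonneg hc.le (mul_nonneg (sq_nonneg _) (hρ x).le)
    · exact hHψρint
    · filter_upwards [ae_restrict_mem measurableSet_Ioi] with x hx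
      exact hpoint x hx
  rw [integral_const_mul] at hfinal
  linarith

open Set Filter in
lemma no_pos (ρ φ ψ f : ℝ → ℝ) (c : ℝ) (hc : 0 < c)
    (hρc : Continuous ρ) (hρ : ∀ x, 0 < ρ x)
    (hφc : Continuous φ) (hφ : ∀ x, 0 < φ x)
    (hfd : ∀ x, HasDerivAt f (φ x) x)
    (hpd : ∀ x, HasDerivAt (fun y => φ y * ρ y) (-(ψ x * ρ x)) x)
    (hψ : ∀ x, 0 < ψ x)
    (hmono : ∀ x y, x ≤ y → ψ x - c * f x ≤ ψ y - c * f y)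
    (hρ1 : ∀ a b : ℝ, a ≤ b → (∫ t in a..b, ρ t) ≤ 1) : False := by
  set p := fun x => φ x * ρ x with hpdef
  have hp : ∀ x, 0 < p x := fun x => mul_pos (hφ x) (hρ x)
  have hpD : Differentiable ℝ p := fun x => (hpd x).differentiableAt
  have hpanti : Antitone p := by
    apply antitone_of_deriv_nonpos hpD
    intro x
    rw [(hpd x).deriv]
    nlinarith [(hψ x).le, (hρ x).le, mul_pos (hψ x) (hρ x)]
  set ε := p 0 with hεdef
  have hε : 0 < ε := hp 0
  -- pointwise lower bound for ρ on (-∞, 0]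
  have hρlow : ∀ x, x ≤ 0 → 1 / φ x ≤ ρ x / ε := by
    intro x hx
    have h1 : ε ≤ p x := hpanti hx
    rw [div_le_div_iff₀ (hφ x) hε]
    calc 1 * ε = ε := one_mul ε
      _ ≤ p x := h1
      _ = ρ x * φ x := by rw [hpdef]; ring
  have key : ∀ T : ℝ, 0 ≤ T → T ^ 2 ≤ (ψ 0 / c) * (1 / ε) := by
    intro T hT
    have hab : (-T) ≤ 0 := neg_nonpos.mpr hT
    -- ∫ φ ≤ ψ 0 / c
    have hfT : (∫ t in (-T)..0, φ t) = f 0 - f (-T) :=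
      intervalIntegral.integral_eq_sub_of_hasDerivAt (fun t _ => hfd t)
        (hφc.intervalIntegrable _ _)
    have hfb : (∫ t in (-T)..0, φ t) ≤ ψ 0 / c := by
      rw [hfT]
      have := hmono (-T) 0 hab
      have hψT := hψ (-T)
      rw [le_div_iff₀ hc]
      nlinarith
    -- ∫ 1/φ ≤ 1/ε
    have hinvb : (∫ t in (-T)..0, 1 / φ t) ≤ 1 / ε := by
      calc (∫ t in (-T)..0, 1 / φ t) ≤ ∫ t in (-T)..0, ρ t / ε := by
            apply intervalIntegral.integral_mono_on hab
            · exact (continuous_const.div hφc (fun x => (hφ x).ne')).intervalIntegrable _ _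
            · exact (hρc.div_const ε).intervalIntegrable _ _
            · intro x hx; exact hρlow x hx.2
        _ = (∫ t in (-T)..0, ρ t) / ε := by
            rw [intervalIntegral.integral_div]
        _ ≤ 1 / ε := by
            gcongr
            exact hρ1 (-T) 0 hab
    -- Cauchy-Schwarz
    have hCS := cs_interval hab (fun t => Real.sqrt (φ t)) (fun t => Real.sqrt (1 / φ t))
      (Real.continuous_sqrt.comp hφc)
      (Real.continuous_sqrt.comp (continuous_const.div hφc (fun x => (hφ x).ne')))
    have huv : ∀ t, Real.sqrt (φ t) * Real.sqrt (1 / φ t) = 1 := by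
      intro t
      rw [← Real.sqrt_mul (hφ t).le, mul_one_div, div_self (hφ t).ne', Real.sqrt_one]
    have h1 : (∫ t in (-T)..0, Real.sqrt (φ t) * Real.sqrt (1 / φ t)) = T := by
      rw [intervalIntegral.integral_congr (g := fun _ => (1:ℝ)) (fun t _ => huv t)]
      simp
    have h2 : (∫ t in (-T)..0, (Real.sqrt (φ t)) ^ 2) = ∫ t in (-T)..0, φ t :=
      intervalIntegral.integral_congr (fun t _ => Real.sq_sqrt (hφ t).le)
    have h3 : (∫ t in (-T)..0, (Real.sqrt (1 / φ t)) ^ 2) = ∫ t in (-T)..0, 1 / φ t :=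
      intervalIntegral.integral_congr (fun t _ => Real.sq_sqrt (one_div_pos.mpr (hφ t)).le)
    rw [h1, h2, h3] at hCS
    have hinn : 0 ≤ ∫ t in (-T)..0, 1 / φ t :=
      intervalIntegral.integral_nonneg hab (fun t _ => (one_div_pos.mpr (hφ t)).le)
    calc T ^ 2 ≤ _ := hCS
      _ ≤ (ψ 0 / c) * (1 / ε) :=
          mul_le_mul hfb hinvb hinn (div_pos (hψ 0) hc).le
  -- contradiction
  set K := (ψ 0 / c) * (1 / ε) with hKdef
  have hK : 0 < K := mul_pos (div_pos (hψ 0) hc) (one_div_pos.mpr hε)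
  have := key (K + 1) (by positivity)
  nlinarith

open Set Filter in
/-- Intertwining criterion for a spectral gap: if `μ ∝ e^{-V}` is a probability measure,
`f` is smooth with `f' > 0` everywhere and the function `V_f = (-(f'' - V'f'))'/f'` is
bounded below by `c > 0`, then the Poincaré inequality `c Var_μ(g) ≤ ∫ g'² dμ` holds for
every smooth compactly supported `g`. -/
theorem intertwining_spectral_gap (V : ℝ → ℝ) (hV : ContDiff ℝ (⊤ : ℕ∞) V)
    (C : ℝ) (hC : 0 < C)
    (μ : Measure ℝ)
    (hμ : μ = MeasureTheory.volume.withDensity fun x =>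
      ENNReal.ofReal (C * Real.exp (-V x)))
    (hμprob : IsProbabilityMeasure μ)
    (f : ℝ → ℝ) (hf : ContDiff ℝ (⊤ : ℕ∞) f) (hf' : ∀ x, 0 < deriv f x)
    (c : ℝ) (hc : 0 < c)
    (hVf : ∀ x,
      c ≤ deriv (fun y => -(deriv (deriv f) y - deriv V y * deriv f y)) x / deriv f x) :
    ∀ g : ℝ → ℝ, ContDiff ℝ (⊤ : ℕ∞) g → HasCompactSupport g →
      c * (∫ x, g x ^ 2 ∂μ - (∫ x, g x ∂μ) ^ 2) ≤ ∫ x, (deriv g x) ^ 2 ∂μ := by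
  intro g hgC hgs
  -- density
  set ρ := fun x => C * Real.exp (-V x) with hρdef
  have hVD : Differentiable ℝ V := hV.differentiable (by simp)
  have hρc : Continuous ρ := continuous_const.mul (Real.continuous_exp.comp hVD.continuous.neg)
  have hρpos : ∀ x, 0 < ρ x := fun x => mul_pos hC (Real.exp_pos _)
  have hρd : ∀ x, HasDerivAt ρ (-(deriv V x) * ρ x) x := by
    intro x
    have h : HasDerivAt ρ (C * (Real.exp (-V x) * -deriv V x)) x :=
      (((hVD x).hasDerivAt.neg).exp).const_mul C
    convert h using 1
    simp only [hρdef]; ring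
  -- smoothness of f, V, g
  have hVpack := contDiff_infty_iff_deriv.mp (hV.of_le (by simp))
  have hV'D : Differentiable ℝ (deriv V) := (contDiff_infty_iff_deriv.mp hVpack.2).1
  have hfpack := contDiff_infty_iff_deriv.mp (hf.of_le (by simp))
  have hfD : Differentiable ℝ f := hfpack.1
  have hf'pack := contDiff_infty_iff_deriv.mp hfpack.2
  have hf'D : Differentiable ℝ (deriv f) := hf'pack.1
  have hf''D : Differentiable ℝ (deriv (deriv f)) := (contDiff_infty_iff_deriv.mp hf'pack.2).1
  have hf'c : Continuous (deriv f) := hf'D.continuous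
  have hfd : ∀ x, HasDerivAt f (deriv f x) x := fun x => (hfD x).hasDerivAt
  have hgpack := contDiff_infty_iff_deriv.mp (hgC.of_le (by simp))
  have hgD : Differentiable ℝ g := hgpack.1
  have hgc : Continuous g := hgD.continuous
  have hg'c : Continuous (deriv g) := hgpack.2.continuous
  have hgd : ∀ x, HasDerivAt g (deriv g x) x := fun x => (hgD x).hasDerivAt
  -- ψ
  set ψ := fun y => -(deriv (deriv f) y - deriv V y * deriv f y) with hψdef
  have hψD : Differentiable ℝ ψ := (hf''D.sub (hV'D.mul hf'D)).neg
  have hψc : Continuous ψ := hψD.continuous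
  have hψ'ge : ∀ x, c * deriv f x ≤ deriv ψ x := fun x => (le_div_iff₀ (hf' x)).mp (hVf x)
  have hηmono : Monotone (fun x => ψ x - c * f x) := by
    apply monotone_of_deriv_nonneg (hψD.sub (hfD.const_mul c))
    intro x
    rw [deriv_sub (hψD x) ((hfD.const_mul c) x), deriv_const_mul c (hfD x)]
    have := hψ'ge x; linarith
  -- p = f' ρ
  have hpd : ∀ x, HasDerivAt (fun y => deriv f y * ρ y) (-(ψ x * ρ x)) x := by
    intro x
    have h : HasDerivAt (fun y => deriv f y * ρ y)
        (deriv (deriv f) x * ρ x + deriv f x * (-(deriv V x) * ρ x)) x :=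
      ((hf'D x).hasDerivAt).mul (hρd x)
    convert h using 1
    simp only [hψdef]; ring
  -- measure facts
  have hρae : 0 ≤ᶠ[ae volume] ρ := Filter.Eventually.of_forall fun x => (hρpos x).le
  have hμuniv : (∫⁻ x, ENNReal.ofReal (ρ x)) = 1 := by
    have h1 := hμprob.measure_univ
    rw [hμ, withDensity_apply _ MeasurableSet.univ, Measure.restrict_univ] at h1
    exact h1
  have hρint : Integrable ρ volume := by
    refine ⟨hρc.aestronglyMeasurable, ?_⟩
    rw [hasFiniteIntegral_iff_ofReal hρae, hμuniv]
    exact ENNReal.one_lt_top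
  have hρtotal : (∫ x, ρ x) = 1 := by
    rw [integral_eq_lintegral_of_nonneg_ae hρae hρc.aestronglyMeasurable, hμuniv]
    simp
  have hρ1 : ∀ a b : ℝ, a ≤ b → (∫ t in a..b, ρ t) ≤ 1 := by
    intro a b hab
    rw [intervalIntegral.integral_of_le hab]
    calc (∫ t in Ioc a b, ρ t) ≤ ∫ x, ρ x := setIntegral_le_integral hρint hρae
      _ = 1 := hρtotal
  -- conversion of μ-integrals
  have hconv : ∀ F : ℝ → ℝ, (∫ x, F x ∂μ) = ∫ x, F x * ρ x := by
    intro F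
    rw [hμ]
    have he : (fun x => ENNReal.ofReal (C * Real.exp (-V x)))
        = fun x => (((ρ x).toNNReal : ℝ≥0) : ℝ≥0∞) := by
      funext x; simp [hρdef, ENNReal.ofReal]
    rw [he, integral_withDensity_eq_integral_smul (f := fun x => (ρ x).toNNReal)
      (hρc.measurable.real_toNNReal)]
    apply integral_congr_ae
    filter_upwards with x
    rw [NNReal.smul_def, Real.coe_toNNReal _ (hρpos x).le, smul_eq_mul, mul_comm]
  -- existence of a zero of ψ
  have hzero : ∃ x₀, ψ x₀ = 0 := by
    by_contra hcon
    push_neg at hcon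
    have hsign : (∀ x, 0 < ψ x) ∨ (∀ x, ψ x < 0) := by
      have ivt : ∀ a b : ℝ, ψ a < 0 → 0 < ψ b → False := by
        intro a b ha hb
        have h0 : (0:ℝ) ∈ uIcc (ψ a) (ψ b) := Set.mem_uIcc.mpr (Or.inl ⟨ha.le, hb.le⟩)
        obtain ⟨z, _, hz⟩ := intermediate_value_uIcc (f := ψ) hψc.continuousOn h0
        exact hcon z hz
      rcases lt_or_gt_of_ne (hcon 0) with h0 | h0
      · right; intro x
        rcases lt_or_gt_of_ne (hcon x) with hx | hx
        · exact hx
        · exact absurd (ivt 0 x h0 hx) (by simp)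
      · left; intro x
        rcases lt_or_gt_of_ne (hcon x) with hx | hx
        · exact absurd (ivt x 0 hx h0) (by simp)
        · exact hx
    rcases hsign with hpos | hneg
    · exact no_pos ρ (deriv f) ψ f c hc hρc hρpos hf'c hf' hfd hpd hpos
        (fun x y hxy => hηmono hxy) hρ1
    · -- reflect
      have hneg1 : ∀ x, HasDerivAt (fun y : ℝ => -y) (-1 : ℝ) x := fun x => (hasDerivAt_id x).neg
      apply no_pos (fun x => ρ (-x)) (fun x => deriv f (-x)) (fun x => -ψ (-x))
        (fun x => -f (-x)) c hc (hρc.comp continuous_neg) (fun x => hρpos (-x))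
        (hf'c.comp continuous_neg) (fun x => hf' (-x))
      · intro x
        have h := ((hfd (-x)).comp x (hneg1 x)).neg
        exact (by simpa using h : HasDerivAt (-(f ∘ Neg.neg)) (deriv f (-x)) x)
      · intro x
        have h := ((hpd (-x)).comp x (hneg1 x))
        have h2 : HasDerivAt (fun y => deriv f (-y) * ρ (-y)) (-(ψ (-x) * ρ (-x)) * (-1)) x := h
        convert h2 using 1
        ring
      · intro x; simpa using hneg (-x)
      · intro x y hxy
        have := hηmono (neg_le_neg hxy)
        simp only at this ⊢
        linarith
      · intro a b hab
        rw [intervalIntegral.integral_comp_neg ρ]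
        exact hρ1 (-b) (-a) (neg_le_neg hab)
  obtain ⟨x₀, hx₀⟩ := hzero
  set m := g x₀ with hmdef
  have hψfR : ∀ x, x₀ ≤ x → c * (f x - f x₀) ≤ ψ x := by
    intro x hx
    have := hηmono hx
    simp only at this
    rw [hx₀] at this
    linarith
  have hψfL : ∀ x, x ≤ x₀ → c * (f x₀ - f x) ≤ -ψ x := by
    intro x hx
    have := hηmono hx
    simp only at this
    rw [hx₀] at this
    linarith
  -- support radius
  obtain ⟨R0, hR0⟩ := (hgs.deriv.isBounded).subset_closedBall 0
  set R := max R0 0 + 1 with hRdef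
  have hsuppR : ∀ x : ℝ, R ≤ |x| → deriv g x = 0 := by
    intro x hx
    apply image_eq_zero_of_notMem_tsupport
    intro hmem
    have := hR0 hmem
    rw [Metric.mem_closedBall, Real.dist_eq, sub_zero] at this
    have h1 : max R0 0 + 1 ≤ R0 := le_trans hx this
    have := le_max_left R0 0
    linarith
  -- integrability facts
  obtain ⟨xm, hxm⟩ := (hgc.abs).exists_forall_ge_of_hasCompactSupport hgs.abs
  set Bg := |g xm| with hBgdef
  have hBg : ∀ x, |g x| ≤ Bg := fun x => hxm x
  have hIg : Integrable g μ := hgc.integrable_of_hasCompactSupport hgs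
  have hIg2 : Integrable (fun x => g x ^ 2) μ := by
    apply Continuous.integrable_of_hasCompactSupport (hgc.pow 2)
    have hgg : (fun x => g x ^ 2) = fun x => g x * g x := funext fun x => by ring
    rw [sq]
    exact (hgs.mul_right : HasCompactSupport (g * g))
  -- variance bound
  have hvar : (∫ x, g x ^ 2 ∂μ) - (∫ x, g x ∂μ) ^ 2 ≤ ∫ x, (g x - m) ^ 2 ∂μ := by
    have hexp : (∫ x, (g x - m) ^ 2 ∂μ)
        = (∫ x, g x ^ 2 ∂μ) - 2 * m * (∫ x, g x ∂μ) + m ^ 2 := by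
      have h1 : (∫ x, (g x - m) ^ 2 ∂μ)
          = ∫ x, (g x ^ 2 - (2 * m) * g x) + m ^ 2 ∂μ :=
        integral_congr_ae (Filter.Eventually.of_forall fun x => by ring)
      have hint2 : Integrable (fun x => 2 * m * g x) μ := by
        have h := hIg.const_mul (2 * m); exact h
      have hint1 : Integrable (fun x => g x ^ 2 - 2 * m * g x) μ := by
        have h := hIg2.sub hint2; exact h
      rw [h1, integral_add hint1 (integrable_const _),
        integral_sub hIg2 hint2, integral_const_mul, integral_const]
      simp [hμprob.measure_univ]
    nlinarith [sq_nonneg ((∫ x, g x ∂μ) - m)]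
  -- bounded multiplier integrability
  have hgmint : Integrable (fun x => (g x - m) ^ 2 * ρ x) volume := by
    apply Integrable.bdd_mul hρint ((hgc.sub continuous_const).pow 2).aestronglyMeasurable
    refine Filter.Eventually.of_forall (fun x => (?_ : ‖(g x - m) ^ 2‖ ≤ (Bg + |m|) ^ 2))
    have h1 : |g x - m| ≤ Bg + |m| := le_trans (abs_sub _ _) (by gcongr; exact hBg x)
    have h2 : 0 ≤ Bg := le_trans (abs_nonneg _) (hBg 0)
    rw [Real.norm_eq_abs, abs_of_nonneg (sq_nonneg _), ← sq_abs]
    nlinarith [abs_nonneg (g x - m)]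
  have hg'int : Integrable (fun x => deriv g x ^ 2 * ρ x) volume := by
    apply Continuous.integrable_of_hasCompactSupport ((hg'c.pow 2).mul hρc)
    have hgg : (fun x => deriv g x ^ 2 * ρ x)
        = fun x => deriv g x * (deriv g x * ρ x) := funext fun x => by ring
    rw [sq, mul_assoc]
    exact (hgs.deriv.mul_right :
      HasCompactSupport (deriv g * fun x => deriv g x * ρ x))
  -- splitting
  have hsplitL : (∫ x, (g x - m) ^ 2 * ρ x)
      = (∫ x in Iic x₀, (g x - m) ^ 2 * ρ x) + ∫ x in Ioi x₀, (g x - m) ^ 2 * ρ x := by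
    rw [← setIntegral_union (Set.Iic_disjoint_Ioi le_rfl) measurableSet_Ioi
      hgmint.integrableOn hgmint.integrableOn, Set.Iic_union_Ioi, setIntegral_univ]
  have hsplitR : (∫ x, deriv g x ^ 2 * ρ x)
      = (∫ x in Iic x₀, deriv g x ^ 2 * ρ x) + ∫ x in Ioi x₀, deriv g x ^ 2 * ρ x := by
    rw [← setIntegral_union (Set.Iic_disjoint_Ioi le_rfl) measurableSet_Ioi
      hg'int.integrableOn hg'int.integrableOn, Set.Iic_union_Ioi, setIntegral_univ]
  -- right half
  have hright : c * (∫ x in Ioi x₀, (g x - m) ^ 2 * ρ x) ≤ ∫ x in Ioi x₀, deriv g x ^ 2 * ρ x := by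
    exact core_right ρ (deriv f) ψ f g (deriv g) c x₀ R hc hρc hρpos hf'c hf' hfd hpd hψc
      hψfR hgd hg'c (fun x hx => hsuppR x (le_trans hx (le_abs_self x)))
  -- left half by reflection
  have hleft : c * (∫ x in Iic x₀, (g x - m) ^ 2 * ρ x) ≤ ∫ x in Iic x₀, deriv g x ^ 2 * ρ x := by
    have hneg1 : ∀ x, HasDerivAt (fun y : ℝ => -y) (-1 : ℝ) x := fun x => (hasDerivAt_id x).neg
    have hcore := core_right (fun x => ρ (-x)) (fun x => deriv f (-x)) (fun x => -ψ (-x))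
      (fun x => -f (-x)) (fun x => g (-x)) (fun x => -deriv g (-x)) c (-x₀) R hc
      (hρc.comp continuous_neg) (fun x => hρpos (-x))
      (hf'c.comp continuous_neg) (fun x => hf' (-x))
      (fun x => (by simpa using ((hfd (-x)).comp x (hneg1 x)).neg :
        HasDerivAt (-(f ∘ Neg.neg)) (deriv f (-x)) x))
      (fun x => by
        have h2 : HasDerivAt (fun y => deriv f (-y) * ρ (-y)) (-(ψ (-x) * ρ (-x)) * (-1)) x :=
          (hpd (-x)).comp x (hneg1 x)
        convert h2 using 1
        ring)
      ((hψc.comp continuous_neg).neg)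
      (fun x hx => by
        have := hψfL (-x) (by linarith)
        simp only [neg_neg]
        linarith)
      (fun x => (by simpa using (hgd (-x)).comp x (hneg1 x) :
        HasDerivAt (g ∘ Neg.neg) (-deriv g (-x)) x))
      ((hg'c.comp continuous_neg).neg)
      (fun x hx => by
        simp only [hsuppR (-x) (by rw [abs_neg]; exact le_trans hx (le_abs_self x)), neg_zero])
    simp only [neg_neg, neg_sq] at hcore
    rw [← hmdef] at hcore
    have hL := integral_comp_neg_Ioi (-x₀) (fun y => (g y - m) ^ 2 * ρ y)
    have hR := integral_comp_neg_Ioi (-x₀) (fun y => deriv g y ^ 2 * ρ y)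
    rw [neg_neg] at hL hR
    rw [hL, hR] at hcore
    exact hcore
  -- final assembly
  have h1 : c * ((∫ x, g x ^ 2 ∂μ) - (∫ x, g x ∂μ) ^ 2) ≤ c * ∫ x, (g x - m) ^ 2 ∂μ := by
    exact mul_le_mul_of_nonneg_left hvar hc.le
  rw [hconv (fun x => (g x - m) ^ 2), hsplitL] at h1
  rw [hconv (fun x => deriv g x ^ 2), hsplitR]
  calc c * ((∫ x, g x ^ 2 ∂μ) - (∫ x, g x ∂μ) ^ 2)
      ≤ c * (∫ x in Iic x₀, (g x - m) ^ 2 * ρ x) + c * (∫ x in Ioi x₀, (g x - m) ^ 2 * ρ x) := by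
        linarith
    _ ≤ (∫ x in Iic x₀, deriv g x ^ 2 * ρ x) + ∫ x in Ioi x₀, deriv g x ^ 2 * ρ x := by
        exact add_le_add hleft hright
end
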